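/- arXiv:hep-th/9212076 — 8 statements merged into one kernel-verified Lean document; each statement's English description precedes it below -/
import Mathlib

section
/- Let T^α_β(u) (α,β ∈ {1,2}) be polynomials with coefficients in an associative algebra satisfying the relation (u−v)·T^{α₁}_{β₁}(u)T^{α₂}_{β₂}(v) + η·T^{α₂}_{β₁}(u)T^{α₁}_{β₂}(v) = (u−v)·T^{α₂}_{β₂}(v)T^{α₁}_{β₁}(u) + η·T^{α₂}_{β₁}(v)T^{α₁}_{β₂}(u). Then the four expressions T^2_2(u)T^1_1(u+η) − T^1_2(u)T^2_1(u+η), T^1_1(u)T^2_2(u+η) − T^2_1(u)T^1_2(u+η), T^1_1(u+η)T^2_2(u) − T^1_2(u+η)T^2_1(u), and T^2_2(u+η)T^1_1(u) − T^2_1(u+η)T^1_2(u) are all equal (as polynomials in u). -/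
open Polynomial

/-- Embed `p(·) ∈ A[X]` as a polynomial in the variable `u` inside `A[v][u]`. -/
noncomputable def inU {A : Type*} [Ring A] (p : A[X]) : Polynomial (A[X]) :=
  p.map Polynomial.C

/-- Embed `p(·) ∈ A[X]` as a polynomial in the variable `v` inside `A[v][u]`. -/
noncomputable def inV {A : Type*} [Ring A] (p : A[X]) : Polynomial (A[X]) :=
  Polynomial.C p

/-- The shifted polynomial `u ↦ p(u + c)`. -/
noncomputable def shiftBy {A : Type*} [Ring A] (c : A) (p : A[X]) : A[X] :=
  p.comp (Polynomial.X + Polynomial.C c)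

namespace QDetAux

variable {A : Type*} [Ring A]

/-- `C X` ("the variable v") is central in `A[v][u]`. -/
lemma commute_CX (f : Polynomial (A[X])) :
    Commute (Polynomial.C (Polynomial.X : A[X])) f := by
  show _ * _ = _ * _
  ext n
  rw [Polynomial.coeff_C_mul, Polynomial.coeff_mul_C, (Polynomial.commute_X _).eq]

/-- `u - v` is central in `A[v][u]`. -/
lemma commute_s (f : Polynomial (A[X])) :
    Commute (Polynomial.X - Polynomial.C (Polynomial.X : A[X])) f :=
  ((Polynomial.commute_X f).sub_left (commute_CX f))

/-- cancellation of the monic `u - v`. -/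
lemma cancel_s {x y : Polynomial (A[X])}
    (h : x * (Polynomial.X - Polynomial.C (Polynomial.X : A[X]))
       = y * (Polynomial.X - Polynomial.C (Polynomial.X : A[X]))) : x = y := by
  by_contra hne
  exact (Polynomial.monic_X_sub_C _).mul_left_ne_zero (sub_ne_zero.mpr hne)
    (by rw [sub_mul, h, sub_self])

/-- divided differences: `p(u) - p(v)` is divisible by `u - v`. -/
lemma exists_delta (p : A[X]) :
    ∃ D : Polynomial (A[X]),
      inU p - inV p = D * (Polynomial.X - Polynomial.C (Polynomial.X : A[X])) := by
  induction p using Polynomial.induction_on' with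
  | add p q hp hq =>
    obtain ⟨D1, h1⟩ := hp
    obtain ⟨D2, h2⟩ := hq
    refine ⟨D1 + D2, ?_⟩
    have hU : inU (p + q) = inU p + inU q := Polynomial.map_add _
    have hV : inV (p + q) = inV p + inV q := map_add _ _ _
    rw [hU, hV, add_mul, ← h1, ← h2]
    abel
  | monomial n a =>
    refine ⟨Polynomial.C (Polynomial.C a) *
      (∑ i ∈ Finset.range n,
        (Polynomial.X : Polynomial (A[X])) ^ i *
          (Polynomial.C (Polynomial.X : A[X])) ^ (n - 1 - i)), ?_⟩
    have hc : Commute (Polynomial.X : Polynomial (A[X]))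
        (Polynomial.C (Polynomial.X : A[X])) := (commute_CX _).symm
    have hg := hc.geom_sum₂_mul n
    have hU : inU (Polynomial.monomial n a)
        = Polynomial.C (Polynomial.C a) * Polynomial.X ^ n := by
      rw [inU, Polynomial.map_monomial, ← Polynomial.C_mul_X_pow_eq_monomial]
    have hV : inV (Polynomial.monomial n a)
        = Polynomial.C (Polynomial.C a) * (Polynomial.C (Polynomial.X : A[X])) ^ n := by
      rw [inV, ← Polynomial.C_mul_X_pow_eq_monomial, map_mul, map_pow]
    rw [hU, hV, ← mul_sub, ← hg, mul_assoc]

/-- The swap `u ↔ v` as a ring homomorphism of `A[v][u]`. -/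
noncomputable def sigma : Polynomial (A[X]) →+* Polynomial (A[X]) :=
  Polynomial.eval₂RingHom' (Polynomial.mapRingHom (Polynomial.C : A →+* A[X]))
    (Polynomial.C Polynomial.X) (fun _ => (commute_CX _).symm)

lemma sigma_X : (sigma : Polynomial (A[X]) →+* _) Polynomial.X
    = Polynomial.C Polynomial.X := by
  simp [sigma]

lemma sigma_inV (p : A[X]) : (sigma : Polynomial (A[X]) →+* _) (inV p) = inU p := by
  simp [sigma, inV, inU]

lemma sigma_inU (p : A[X]) : (sigma : Polynomial (A[X]) →+* _) (inU p) = inV p := by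
  show Polynomial.eval₂ (Polynomial.mapRingHom (Polynomial.C : A →+* A[X]))
    (Polynomial.C Polynomial.X) (p.map Polynomial.C) = Polynomial.C p
  rw [Polynomial.eval₂_map]
  have hcomp : (Polynomial.mapRingHom (Polynomial.C : A →+* A[X])).comp
        (Polynomial.C : A →+* A[X])
      = (Polynomial.C : A[X] →+* Polynomial (A[X])).comp (Polynomial.C : A →+* A[X]) := by
    ext a
    simp
  rw [hcomp, ← Polynomial.hom_eval₂ _ _ _ _, Polynomial.eval₂_C_X]

lemma sigma_s : (sigma : Polynomial (A[X]) →+* _)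
      (Polynomial.X - Polynomial.C (Polynomial.X : A[X]))
    = Polynomial.C (Polynomial.X : A[X]) - Polynomial.X := by
  rw [map_sub, sigma_X]
  have h : (Polynomial.C (Polynomial.X : A[X])) = inV Polynomial.X := rfl
  rw [h, sigma_inV, inU, Polynomial.map_X]

lemma sigma_word (p q : A[X]) :
    (sigma : Polynomial (A[X]) →+* _) (inU p * inV q) = inV p * inU q := by
  rw [map_mul, sigma_inU, sigma_inV]

lemma sigma_word' (p q : A[X]) :
    (sigma : Polynomial (A[X]) →+* _) (inV p * inU q) = inU p * inV q := by
  rw [map_mul, sigma_inV, sigma_inU]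

/-- the `Λ` elements are fixed by the swap. -/
lemma sigma_lambda {p q : A[X]} {L : Polynomial (A[X])}
    (hF : inU p * inV q - inV p * inU q
      = L * (Polynomial.X - Polynomial.C (Polynomial.X : A[X]))) :
    (sigma : Polynomial (A[X]) →+* _) L = L := by
  have h2 := congrArg (sigma : Polynomial (A[X]) →+* _) hF
  rw [map_sub, sigma_word, sigma_word', map_mul, sigma_s] at h2
  apply cancel_s
  rw [mul_sub, mul_sub]
  have hexp : sigma L * Polynomial.C (Polynomial.X : A[X]) - sigma L * Polynomial.X
      = inV p * inU q - inU p * inV q := by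
    rw [← mul_sub]; exact h2.symm
  have hexp2 : L * Polynomial.X - L * Polynomial.C (Polynomial.X : A[X])
      = inU p * inV q - inV p * inU q := by
    rw [← mul_sub]; exact hF.symm
  have h3 : (sigma L * Polynomial.C (Polynomial.X : A[X]) - sigma L * Polynomial.X)
      + (L * Polynomial.X - L * Polynomial.C (Polynomial.X : A[X])) = 0 := by
    rw [hexp, hexp2]; abel
  rw [← sub_eq_zero]
  calc (sigma L * Polynomial.X - sigma L * Polynomial.C (Polynomial.X : A[X]))
      - (L * Polynomial.X - L * Polynomial.C (Polynomial.X : A[X]))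
      = 0 - ((sigma L * Polynomial.C (Polynomial.X : A[X]) - sigma L * Polynomial.X)
          + (L * Polynomial.X - L * Polynomial.C (Polynomial.X : A[X]))) := by abel
    _ = 0 := by rw [h3]; abel

/-- the two-factor divided difference identity. -/
lemma F_step {p q : A[X]} {Dp Dq : Polynomial (A[X])}
    (hp : inU p - inV p = Dp * (Polynomial.X - Polynomial.C (Polynomial.X : A[X])))
    (hq : inU q - inV q = Dq * (Polynomial.X - Polynomial.C (Polynomial.X : A[X]))) :
    inU p * inV q - inV p * inU q
      = (Dp * inV q - inV p * Dq) * (Polynomial.X - Polynomial.C (Polynomial.X : A[X])) := by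
  calc inU p * inV q - inV p * inU q
      = (inU p - inV p) * inV q - inV p * (inU q - inV q) := by
        rw [sub_mul, mul_sub]; abel
    _ = (Dp * (Polynomial.X - Polynomial.C (Polynomial.X : A[X]))) * inV q
        - inV p * (Dq * (Polynomial.X - Polynomial.C (Polynomial.X : A[X]))) := by rw [hp, hq]
    _ = (Dp * inV q - inV p * Dq)
        * (Polynomial.X - Polynomial.C (Polynomial.X : A[X])) := by
        rw [mul_assoc Dp, (commute_s (inV q)).eq, ← mul_assoc, ← mul_assoc, ← sub_mul]

/-- the basic consequence of one instance of the quadratic relation. -/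
lemma C_step {γ βp α αp L e : Polynomial (A[X])}
    (hJ : (Polynomial.X - Polynomial.C (Polynomial.X : A[X])) * γ + e * α
        = (Polynomial.X - Polynomial.C (Polynomial.X : A[X])) * βp + e * αp)
    (hF : α - αp = L * (Polynomial.X - Polynomial.C (Polynomial.X : A[X]))) :
    βp - γ = e * L := by
  apply cancel_s
  calc (βp - γ) * (Polynomial.X - Polynomial.C (Polynomial.X : A[X]))
      = (Polynomial.X - Polynomial.C (Polynomial.X : A[X])) * (βp - γ) :=
        ((commute_s _).eq).symm
    _ = ((Polynomial.X - Polynomial.C (Polynomial.X : A[X])) * βp + e * αp)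
        - ((Polynomial.X - Polynomial.C (Polynomial.X : A[X])) * γ + e * αp) := by
          rw [mul_sub]; abel
    _ = ((Polynomial.X - Polynomial.C (Polynomial.X : A[X])) * γ + e * α)
        - ((Polynomial.X - Polynomial.C (Polynomial.X : A[X])) * γ + e * αp) := by rw [← hJ]
    _ = e * α - e * αp := by abel
    _ = e * (α - αp) := by rw [mul_sub]
    _ = e * (L * (Polynomial.X - Polynomial.C (Polynomial.X : A[X]))) := by rw [hF]
    _ = (e * L) * (Polynomial.X - Polynomial.C (Polynomial.X : A[X])) := by rw [mul_assoc]

section Phi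

variable {R : Type*} [CommRing R] [Algebra R A] (η : R)

/-- Evaluation `u ↦ v + η` as a ring homomorphism `A[v][u] → A[v]`. -/
noncomputable def phi : Polynomial (A[X]) →+* A[X] :=
  Polynomial.eval₂RingHom' (RingHom.id A[X])
    (Polynomial.X + Polynomial.C (algebraMap R A η))
    (fun a => (Polynomial.commute_X a).symm.add_right (by
      have h : (Polynomial.C (algebraMap R A η) : A[X]) = algebraMap R A[X] η :=
        (Polynomial.algebraMap_apply _).symm
      rw [h]
      exact (Algebra.commutes η a).symm))

lemma phi_C (q : A[X]) : phi (A := A) η (Polynomial.C q) = q := by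
  simp [phi]

lemma phi_inV (p : A[X]) : phi (A := A) η (inV p) = p := phi_C η p

lemma phi_inU (p : A[X]) :
    phi (A := A) η (inU p) = shiftBy (algebraMap R A η) p := by
  show Polynomial.eval₂ (RingHom.id A[X])
    (Polynomial.X + Polynomial.C (algebraMap R A η)) (p.map Polynomial.C) = _
  rw [Polynomial.eval₂_map, RingHom.id_comp]
  rfl

lemma phi_X : phi (A := A) η Polynomial.X
    = Polynomial.X + Polynomial.C (algebraMap R A η) := by simp [phi]

lemma phi_s : phi (A := A) η (Polynomial.X - Polynomial.C (Polynomial.X : A[X]))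
    = Polynomial.C (algebraMap R A η) := by
  rw [map_sub, phi_C, phi_X, add_sub_cancel_left]

lemma phi_eps : phi (A := A) η (algebraMap R (Polynomial (A[X])) η)
    = Polynomial.C (algebraMap R A η) := by
  rw [Polynomial.algebraMap_apply, phi_C, Polynomial.algebraMap_apply]

lemma sigma_eps : (sigma : Polynomial (A[X]) →+* _) (algebraMap R (Polynomial (A[X])) η)
    = algebraMap R (Polynomial (A[X])) η := by
  rw [Polynomial.algebraMap_apply]
  have h : (Polynomial.C (algebraMap R A[X] η) : Polynomial (A[X]))
      = inV (algebraMap R A[X] η) := rfl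
  rw [h, sigma_inV, inU, Polynomial.algebraMap_apply, Polynomial.map_C]
  rfl

lemma eps_comm (q : A[X]) :
    Polynomial.C (algebraMap R A η) * q = q * Polynomial.C (algebraMap R A η) := by
  have h : (Polynomial.C (algebraMap R A η) : A[X]) = algebraMap R A[X] η :=
    (Polynomial.algebraMap_apply _).symm
  rw [h]
  exact Algebra.commutes η q

end Phi

end QDetAux

open QDetAux in
/-- For a `2×2` monodromy matrix `T^α_β(u)` (indices `0,1` standing for `1,2`)
satisfying the Yangian quadratic relation as an identity of polynomials in
commuting indeterminates `u, v`, the four expressions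
`T²₂(u)T¹₁(u+η) − T¹₂(u)T²₁(u+η)`, `T¹₁(u)T²₂(u+η) − T²₁(u)T¹₂(u+η)`,
`T¹₁(u+η)T²₂(u) − T¹₂(u+η)T²₁(u)`, `T²₂(u+η)T¹₁(u) − T²₁(u+η)T¹₂(u)`
are all equal (to the quantum determinant). -/
theorem quantum_determinant_four_forms
    {R : Type*} [CommRing R] {A : Type*} [Ring A] [Algebra R A]
    (η : R) (T : Fin 2 → Fin 2 → A[X])
    (hrel : ∀ α₁ α₂ β₁ β₂ : Fin 2,
      (Polynomial.X - inV Polynomial.X) * (inU (T α₁ β₁) * inV (T α₂ β₂))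
        + algebraMap R (Polynomial (A[X])) η * (inU (T α₂ β₁) * inV (T α₁ β₂))
      = (Polynomial.X - inV Polynomial.X) * (inV (T α₂ β₂) * inU (T α₁ β₁))
        + algebraMap R (Polynomial (A[X])) η * (inV (T α₂ β₁) * inU (T α₁ β₂))) :
    (T 1 1 * shiftBy (algebraMap R A η) (T 0 0)
        - T 0 1 * shiftBy (algebraMap R A η) (T 1 0)
      = T 0 0 * shiftBy (algebraMap R A η) (T 1 1)
        - T 1 0 * shiftBy (algebraMap R A η) (T 0 1))
    ∧ (T 0 0 * shiftBy (algebraMap R A η) (T 1 1)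
        - T 1 0 * shiftBy (algebraMap R A η) (T 0 1)
      = shiftBy (algebraMap R A η) (T 0 0) * T 1 1
        - shiftBy (algebraMap R A η) (T 0 1) * T 1 0)
    ∧ (shiftBy (algebraMap R A η) (T 0 0) * T 1 1
        - shiftBy (algebraMap R A η) (T 0 1) * T 1 0
      = shiftBy (algebraMap R A η) (T 1 1) * T 0 0
        - shiftBy (algebraMap R A η) (T 1 0) * T 0 1) := by
  have J11 := hrel 1 0 0 1
  have J9 := hrel 0 1 0 1
  have J12 := hrel 1 0 1 0
  simp only [show (inV Polynomial.X : Polynomial (A[X])) = Polynomial.C Polynomial.X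
    from rfl] at J11 J9 J12
  obtain ⟨Da, hDa⟩ := exists_delta (T 0 0)
  obtain ⟨Db, hDb⟩ := exists_delta (T 0 1)
  obtain ⟨Dc, hDc⟩ := exists_delta (T 1 0)
  obtain ⟨Dd, hDd⟩ := exists_delta (T 1 1)
  obtain ⟨Lα, Fα⟩ : ∃ L, inU (T 0 0) * inV (T 1 1) - inV (T 0 0) * inU (T 1 1)
      = L * (Polynomial.X - Polynomial.C (Polynomial.X : A[X])) := ⟨_, F_step hDa hDd⟩
  obtain ⟨Lβ, Fβ⟩ : ∃ L, inU (T 0 1) * inV (T 1 0) - inV (T 0 1) * inU (T 1 0)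
      = L * (Polynomial.X - Polynomial.C (Polynomial.X : A[X])) := ⟨_, F_step hDb hDc⟩
  obtain ⟨Lγ, Fγ⟩ : ∃ L, inU (T 1 0) * inV (T 0 1) - inV (T 1 0) * inU (T 0 1)
      = L * (Polynomial.X - Polynomial.C (Polynomial.X : A[X])) := ⟨_, F_step hDc hDb⟩
  -- consequences of the quadratic relation
  have C1 : inV (T 0 1) * inU (T 1 0) - inU (T 1 0) * inV (T 0 1)
      = algebraMap R (Polynomial (A[X])) η * Lα := C_step J11 Fα
  have C3 : inV (T 1 1) * inU (T 0 0) - inU (T 0 0) * inV (T 1 1)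
      = algebraMap R (Polynomial (A[X])) η * Lγ := C_step J9 Fγ
  have C4 : inV (T 0 0) * inU (T 1 1) - inU (T 1 1) * inV (T 0 0)
      = algebraMap R (Polynomial (A[X])) η * Lβ := C_step J12 Fβ
  have sLγ : (sigma : Polynomial (A[X]) →+* _) Lγ = Lγ := sigma_lambda Fγ
  -- torsion identity
  have T2 : algebraMap R (Polynomial (A[X])) η * Lβ
      + algebraMap R (Polynomial (A[X])) η * Lγ = 0 := by
    have σC3 := congrArg (sigma : Polynomial (A[X]) →+* _) C3
    rw [map_sub, sigma_word', sigma_word, map_mul, sigma_eps, sLγ] at σC3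
    -- σC3 : inU (T 1 1) * inV (T 0 0) - inV (T 0 0) * inU (T 1 1) = e * Lγ
    rw [← σC3, ← C4]
    abel
  -- apply the evaluation u ↦ v + η
  have E1 := congrArg (phi (A := A) η) Fα
  have E2 := congrArg (phi (A := A) η) Fβ
  have E3 := congrArg (phi (A := A) η) Fγ
  have E5 := congrArg (phi (A := A) η) C1
  have E7 := congrArg (phi (A := A) η) C3
  have E8 := congrArg (phi (A := A) η) C4
  have E10 := congrArg (phi (A := A) η) T2
  simp only [map_sub, map_add, map_mul, map_zero, phi_inU, phi_inV, phi_s,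
    phi_eps, phi_X, phi_C, add_sub_cancel_left] at E1 E2 E3 E5 E7 E8 E10
  rw [eps_comm] at E5 E7 E8
  rw [eps_comm, eps_comm] at E10
  -- E1 : S a * d - a * S d = lα * ε
  -- E2 : S b * c - b * S c = lβ * ε
  -- E3 : S c * b - c * S b = lγ * ε
  -- E5 : b * S c - S c * b = lα * ε
  -- E7 : d * S a - S a * d = lγ * ε
  -- E8 : a * S d - S d * a = lβ * ε
  -- E10 : lβ * ε + lγ * ε = 0
  refine ⟨?_, ?_, ?_⟩
  · rw [← sub_eq_zero]
    calc (T 1 1 * shiftBy (algebraMap R A η) (T 0 0)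
          - T 0 1 * shiftBy (algebraMap R A η) (T 1 0))
        - (T 0 0 * shiftBy (algebraMap R A η) (T 1 1)
          - T 1 0 * shiftBy (algebraMap R A η) (T 0 1))
        = ((T 1 1 * shiftBy (algebraMap R A η) (T 0 0)
            - shiftBy (algebraMap R A η) (T 0 0) * T 1 1)
          + (shiftBy (algebraMap R A η) (T 0 0) * T 1 1
            - T 0 0 * shiftBy (algebraMap R A η) (T 1 1)))
        - ((shiftBy (algebraMap R A η) (T 1 0) * T 0 1
            - T 1 0 * shiftBy (algebraMap R A η) (T 0 1))
          + (T 0 1 * shiftBy (algebraMap R A η) (T 1 0)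
            - shiftBy (algebraMap R A η) (T 1 0) * T 0 1)) := by abel
      _ = ((phi (A := A) η Lγ * Polynomial.C (algebraMap R A η))
            + (phi (A := A) η Lα * Polynomial.C (algebraMap R A η)))
        - ((phi (A := A) η Lγ * Polynomial.C (algebraMap R A η))
            + (phi (A := A) η Lα * Polynomial.C (algebraMap R A η))) := by
          rw [E7, E1, E3, E5]
      _ = 0 := by abel
  · rw [← sub_eq_zero]
    calc (T 0 0 * shiftBy (algebraMap R A η) (T 1 1)
          - T 1 0 * shiftBy (algebraMap R A η) (T 0 1))
        - (shiftBy (algebraMap R A η) (T 0 0) * T 1 1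
          - shiftBy (algebraMap R A η) (T 0 1) * T 1 0)
        = ((shiftBy (algebraMap R A η) (T 0 1) * T 1 0
            - T 0 1 * shiftBy (algebraMap R A η) (T 1 0))
          + (T 0 1 * shiftBy (algebraMap R A η) (T 1 0)
            - shiftBy (algebraMap R A η) (T 1 0) * T 0 1)
          + (shiftBy (algebraMap R A η) (T 1 0) * T 0 1
            - T 1 0 * shiftBy (algebraMap R A η) (T 0 1)))
        - (shiftBy (algebraMap R A η) (T 0 0) * T 1 1
            - T 0 0 * shiftBy (algebraMap R A η) (T 1 1)) := by abel
      _ = ((phi (A := A) η Lβ * Polynomial.C (algebraMap R A η))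
          + (phi (A := A) η Lα * Polynomial.C (algebraMap R A η))
          + (phi (A := A) η Lγ * Polynomial.C (algebraMap R A η)))
        - (phi (A := A) η Lα * Polynomial.C (algebraMap R A η)) := by
          rw [E2, E5, E3, E1]
      _ = phi (A := A) η Lβ * Polynomial.C (algebraMap R A η)
        + phi (A := A) η Lγ * Polynomial.C (algebraMap R A η) := by abel
      _ = 0 := E10
  · rw [← sub_eq_zero]
    calc (shiftBy (algebraMap R A η) (T 0 0) * T 1 1
          - shiftBy (algebraMap R A η) (T 0 1) * T 1 0)
        - (shiftBy (algebraMap R A η) (T 1 1) * T 0 0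
          - shiftBy (algebraMap R A η) (T 1 0) * T 0 1)
        = ((shiftBy (algebraMap R A η) (T 0 0) * T 1 1
            - T 0 0 * shiftBy (algebraMap R A η) (T 1 1))
          + (T 0 0 * shiftBy (algebraMap R A η) (T 1 1)
            - shiftBy (algebraMap R A η) (T 1 1) * T 0 0))
        - ((shiftBy (algebraMap R A η) (T 0 1) * T 1 0
            - T 0 1 * shiftBy (algebraMap R A η) (T 1 0))
          + (T 0 1 * shiftBy (algebraMap R A η) (T 1 0)
            - shiftBy (algebraMap R A η) (T 1 0) * T 0 1)) := by abel
      _ = ((phi (A := A) η Lα * Polynomial.C (algebraMap R A η))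
            + (phi (A := A) η Lβ * Polynomial.C (algebraMap R A η)))
        - ((phi (A := A) η Lβ * Polynomial.C (algebraMap R A η))
            + (phi (A := A) η Lα * Polynomial.C (algebraMap R A η))) := by
          rw [E1, E8, E2, E5]
      _ = 0 := by abel
end

section
/- Let T^α_β(u) (α,β ∈ {1,2}) satisfy the Yangian quadratic relation (u−v)·T^{α₁}_{β₁}(u)T^{α₂}_{β₂}(v) + η·T^{α₂}_{β₁}(u)T^{α₁}_{β₂}(v) = (u−v)·T^{α₂}_{β₂}(v)T^{α₁}_{β₁}(u) + η·T^{α₂}_{β₁}(v)T^{α₁}_{β₂}(u). Then the quantum determinant d(u) := T^1_1(u)T^2_2(u+η) − T^2_1(u)T^1_2(u+η) is central: [d(u), T^γ_δ(v)] = 0 for all γ, δ ∈ {1,2} and all u, v. -/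
/-!
Substituting `u ↦ u + η` and `v ↦ u + η` in the quadratic relation gives, besides the relation
between `T(u)` and `T(v)`, exchange relations between `T(u + η)` and `T(v)` and between `T(u)`
and `T(u + η)`. An explicit combination of these three families shows that
`(u - v)(u - v + 2η) · [d(u), T^γ_δ(v)] = 0`, and the factor `(u - v)(u - v + 2η)` is monic in
`u`, hence not a zero divisor in `A[v][u]`.
-/

open Polynomial

/-- Entrywise form of `R(w) T₁ T₂ = T₂ T₁ R(w)` with `R(w) = w + h P`, `P` the flip. -/
def YangRelation {ι B : Type*} [Ring B] (w h : B) (X Y : ι → ι → B) : Prop :=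
  ∀ α₁ α₂ β₁ β₂ : ι, w * (X α₁ β₁ * Y α₂ β₂) + h * (X α₂ β₁ * Y α₁ β₂)
    = w * (Y α₂ β₂ * X α₁ β₁) + h * (Y α₂ β₁ * X α₁ β₂)

namespace YangRelation

variable {ι B : Type*} [Ring B]

theorem map {B' : Type*} [Ring B'] (f : B →+* B') {w h : B} {X Y : ι → ι → B}
    (H : YangRelation w h X Y) :
    YangRelation (f w) (f h) (fun i j => f (X i j)) (fun i j => f (Y i j)) :=
  fun α₁ α₂ β₁ β₂ => by simpa only [map_add, map_mul] using congrArg f (H α₁ α₂ β₁ β₂)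

theorem smul_det_mul_comm {S : Type*} [CommRing S] [Algebra S B] (w h : S)
    {U P V : Fin 2 → Fin 2 → B}
    (hUV : YangRelation (algebraMap S B w) (algebraMap S B h) U V)
    (hPV : YangRelation (algebraMap S B (w + h)) (algebraMap S B h) P V)
    (hUP : YangRelation (algebraMap S B (-h)) (algebraMap S B h) U P) (γ δ : Fin 2) :
    (w * (w + 2 * h)) • ((U 0 0 * P 1 1 - U 1 0 * P 0 1) * V γ δ)
      = (w * (w + 2 * h)) • (V γ δ * (U 0 0 * P 1 1 - U 1 0 * P 0 1)) := by
  simp only [YangRelation, ← Algebra.smul_def] at hUV hPV hUP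
  fin_cases γ <;> fin_cases δ <;> simp only [Fin.zero_eta, Fin.mk_one, Fin.isValue]
  on_goal 1 =>
    linear_combination (norm := skip)
      (w + h) • (hUV 0 0 0 0 * P 1 1) + h • (hUV 0 0 0 1 * P 1 0) - (w + h) • (hUV 1 0 0 0 * P 0 1)
      - h • (hUV 1 0 0 1 * P 0 0) - w • (U 1 0 * hPV 0 0 1 0) - h • (U 0 0 * hPV 0 1 1 0)
      + (w + h) • (U 0 0 * hPV 1 0 1 0) - w • (V 0 1 * hUP 0 1 0 0) - h • (V 0 0 * hUP 0 1 0 1)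
      - h • (V 0 0 * hUP 0 1 1 0)
  on_goal 2 =>
    linear_combination (norm := skip)
      (w + 2 * h) • (hUV 0 0 0 1 * P 1 1) - (w + 2 * h) • (hUV 1 0 0 1 * P 0 1)
      - w • (U 1 0 * hPV 0 0 1 1) - h • (U 0 0 * hPV 0 1 1 1) + (w + h) • (U 0 0 * hPV 1 0 1 1)
      - (w + 2 * h) • (V 0 0 * hUP 0 1 1 1)
  on_goal 3 =>
    linear_combination (norm := skip)
      (w + h) • (hUV 0 1 0 0 * P 1 1) + h • (hUV 0 1 0 1 * P 1 0) - (w + h) • (hUV 1 1 0 0 * P 0 1)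
      - h • (hUV 1 1 0 1 * P 0 0) - (w + h) • (U 1 0 * hPV 0 1 1 0) + h • (U 1 0 * hPV 1 0 1 0)
      + w • (U 0 0 * hPV 1 1 1 0) - w • (V 1 1 * hUP 0 1 0 0) - h • (V 1 0 * hUP 0 1 0 1)
      - h • (V 1 0 * hUP 0 1 1 0)
  on_goal 4 =>
    linear_combination (norm := skip)
      (w + 2 * h) • (hUV 0 1 0 1 * P 1 1) - (w + 2 * h) • (hUV 1 1 0 1 * P 0 1)
      - (w + h) • (U 1 0 * hPV 0 1 1 1) + h • (U 1 0 * hPV 1 0 1 1) + w • (U 0 0 * hPV 1 1 1 1)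
      - (w + 2 * h) • (V 1 0 * hUP 0 1 1 1)
  all_goals
    simp only [smul_add, smul_sub, add_mul, mul_add, sub_mul, mul_sub, smul_mul_assoc,
      mul_smul_comm, mul_assoc]
    module

end YangRelation

theorem Polynomial.X_mem_center {A : Type*} [Ring A] : (X : A[X]) ∈ Subring.center A[X] :=
  Subring.mem_center_iff.mpr fun p => (commute_X p).symm.eq

theorem Polynomial.C_mem_center {A : Type*} [Ring A] {a : A} (ha : a ∈ Subring.center A) :
    C a ∈ Subring.center A[X] :=
  Subring.mem_center_iff.mpr fun p => by
    ext n
    simp only [coeff_mul_C, coeff_C_mul, Subring.mem_center_iff.mp ha]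

section Substitution

variable {R A : Type*} [CommRing R] [Ring A] [Algebra R A]

noncomputable def shiftRingHom (η : R) : A[X] →+* A[X] :=
  eval₂RingHom' C (X + C (algebraMap R A η)) fun a =>
    (commute_X (C a)).symm.add_right ((Algebra.commute_algebraMap_left η a).symm.map C)

theorem shiftRingHom_apply (η : R) (p : A[X]) :
    shiftRingHom η p = shiftBy (algebraMap R A η) p := rfl

theorem shiftBy_X (c : A) : shiftBy c (X : A[X]) = X + C c :=
  X_comp

theorem shiftRingHom_inV (η : R) (p : A[X]) : shiftRingHom η (inV p) = inV p :=
  eval₂_C _ _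

theorem shiftRingHom_inU (η : R) (p : A[X]) :
    shiftRingHom η (inU p) = inU (shiftBy (algebraMap R A η) p) := by
  simp only [shiftRingHom_apply, shiftBy, inU, map_comp, Polynomial.map_add, Polynomial.map_X,
    Polynomial.map_C, Polynomial.algebraMap_apply]

theorem shiftRingHom_X (η : R) :
    shiftRingHom η (X : A[X][X]) = X + algebraMap R A[X][X] η := by
  simp only [shiftRingHom_apply, shiftBy_X, Polynomial.algebraMap_apply]

theorem shiftRingHom_algebraMap (η r : R) :
    shiftRingHom η (algebraMap R A[X][X] r) = algebraMap R A[X][X] r := by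
  rw [Polynomial.algebraMap_apply]
  exact eval₂_C _ _

/-- The substitution `v ↦ u + η` from `A[v][u]` to `A[u]`. -/
noncomputable def diagShiftRingHom (η : R) : A[X][X] →+* A[X] :=
  eval₂RingHom' (shiftRingHom η) X fun _ => (commute_X _).symm

theorem diagShiftRingHom_inU (η : R) (p : A[X]) : diagShiftRingHom η (inU p) = p := by
  have hC : (shiftRingHom η).comp C = (C : A →+* A[X]) := RingHom.ext fun _ => eval₂_C _ _
  change eval₂ _ _ _ = _
  rw [inU, eval₂_map, hC, eval₂_C_X]

theorem diagShiftRingHom_inV (η : R) (p : A[X]) :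
    diagShiftRingHom η (inV p) = shiftBy (algebraMap R A η) p :=
  eval₂_C _ _

theorem diagShiftRingHom_X (η : R) : diagShiftRingHom η (X : A[X][X]) = X :=
  eval₂_X _ _

theorem diagShiftRingHom_algebraMap (η r : R) :
    diagShiftRingHom η (algebraMap R A[X][X] r) = algebraMap R A[X] r := by
  rw [Polynomial.algebraMap_apply, Polynomial.algebraMap_apply]
  exact (eval₂_C _ _).trans (eval₂_C _ _)

variable {ι : Type*} {η : R} {T : ι → ι → A[X]}

theorem YangRelation.shift_inU
    (H : YangRelation (X - inV X) (algebraMap R A[X][X] η) (fun i j => inU (T i j))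
      (fun i j => inV (T i j))) :
    YangRelation (X - inV X + algebraMap R A[X][X] η) (algebraMap R A[X][X] η)
      (fun i j => inU (shiftBy (algebraMap R A η) (T i j))) (fun i j => inV (T i j)) := by
  simpa only [map_sub, shiftRingHom_X, shiftRingHom_inV, shiftRingHom_inU,
    shiftRingHom_algebraMap, add_sub_right_comm] using H.map (shiftRingHom η)

theorem YangRelation.diagonal
    (H : YangRelation (X - inV X) (algebraMap R A[X][X] η) (fun i j => inU (T i j))
      (fun i j => inV (T i j))) :
    YangRelation (-algebraMap R A[X][X] η) (algebraMap R A[X][X] η)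
      (fun i j => inU (T i j)) (fun i j => inU (shiftBy (algebraMap R A η) (T i j))) := by
  have := (H.map (diagShiftRingHom η)).map (mapRingHom C)
  simp only [map_sub, diagShiftRingHom_X, diagShiftRingHom_inV, diagShiftRingHom_inU,
    diagShiftRingHom_algebraMap, shiftBy_X, sub_add_cancel_left, map_neg] at this
  simpa only [coe_mapRingHom, Polynomial.map_C, Polynomial.algebraMap_apply, inU] using this

end Substitution

/-- For a `2×2` monodromy matrix `T^α_β(u)` (indices `0,1` standing for `1,2`)
satisfying the Yangian quadratic relation, the quantum determinant
`d(u) = T¹₁(u)T²₂(u+η) − T²₁(u)T¹₂(u+η)` is central: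
`[d(u), T^γ_δ(v)] = 0` as an identity of polynomials in commuting
indeterminates `u, v`. -/
theorem quantum_determinant_central
    {R : Type*} [CommRing R] {A : Type*} [Ring A] [Algebra R A]
    (η : R) (T : Fin 2 → Fin 2 → A[X])
    (hrel : ∀ α₁ α₂ β₁ β₂ : Fin 2,
      (Polynomial.X - inV Polynomial.X) * (inU (T α₁ β₁) * inV (T α₂ β₂))
        + algebraMap R (Polynomial (A[X])) η * (inU (T α₂ β₁) * inV (T α₁ β₂))
      = (Polynomial.X - inV Polynomial.X) * (inV (T α₂ β₂) * inU (T α₁ β₁))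
        + algebraMap R (Polynomial (A[X])) η * (inV (T α₂ β₁) * inU (T α₁ β₂))) :
    ∀ γ δ : Fin 2,
      inU (T 0 0 * shiftBy (algebraMap R A η) (T 1 1)
            - T 1 0 * shiftBy (algebraMap R A η) (T 0 1)) * inV (T γ δ)
      = inV (T γ δ) *
          inU (T 0 0 * shiftBy (algebraMap R A η) (T 1 1)
            - T 1 0 * shiftBy (algebraMap R A η) (T 0 1)) := by
  intro γ δ
  let w : Subring.center A[X][X] :=
    ⟨X - inV X, sub_mem X_mem_center (C_mem_center X_mem_center)⟩
  let h : Subring.center A[X][X] :=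
    ⟨algebraMap R A[X][X] η, Subring.mem_center_iff.mpr fun g => (Algebra.commutes η g).symm⟩
  have hUV : YangRelation (algebraMap _ _ w) (algebraMap _ _ h) (fun i j => inU (T i j))
      (fun i j => inV (T i j)) := hrel
  have key := YangRelation.smul_det_mul_comm w h hUV hUV.shift_inU hUV.diagonal γ δ
  rw [Algebra.smul_def, Algebra.smul_def, map_mul, map_add, map_mul, map_ofNat] at key
  have hmonic : ((X - inV X) * (X - inV X + 2 * algebraMap R A[X][X] η)).Monic := by
    refine (monic_X_sub_C X).mul ?_
    convert monic_X_sub_C (X - 2 * algebraMap R A[X] η) using 1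
    simp only [inV, Polynomial.algebraMap_apply, map_sub, map_mul, map_ofNat]
    abel
  simp only [inU, Polynomial.map_sub, Polynomial.map_mul]
  exact hmonic.isRegular.left key
end

section
/- Let T¹(u), T²(u), U₁(u), U₂(u) be families of elements of an associative algebra (polynomials in u) satisfying: (i) (u−v−η)·Tᵃ(u)Tᵇ(v) = (u−v)·Tᵇ(v)Tᵃ(u) − η·Tᵃ(v)Tᵇ(u) for a,b ∈ {1,2}; (ii) (u−v+η)·Uₐ(u)U_b(v) = (u−v)·U_b(v)Uₐ(u) + η·Uₐ(v)U_b(u) for a,b ∈ {1,2}; (iii) [Tᵃ(u), U_b(v)] = 0 for all a,b ∈ {1,2} and all u,v. Define B_c(u) := T²(u)U₁(u−c) − T¹(u)U₂(u−c) for a fixed scalar c. Then [B_c(u), B_c(v)] = 0 for all u, v. -/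
open Polynomial

/-- The shifted polynomial `u ↦ p(u - c)`. -/
noncomputable def shiftDown {A : Type*} [Ring A] (c : A) (p : A[X]) : A[X] :=
  p.comp (Polynomial.X - Polynomial.C c)

/-!
Put `x = u - v` and `W(u) = U(u - c)`; the shift `u, v ↦ u - c, v - c` fixes `x`, so `W` satisfies
relation (ii) as well. Since `T(u)` commutes with `W(v)` and `W(u)` with `T(v)`, both `B(u)B(v)` and
`B(v)B(u)` are the contraction `mixedDet` of a pair of 2×2 matrices: `M = (Tᵃ(u)Tᵇ(v))`,
`N = (Wₐ(u)W_b(v))`, resp. `M' = (Tᵇ(v)Tᵃ(u))`, `N' = (W_b(v)Wₐ(u))`. Relation (i) reads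
`(x - η)M = xM' - ηM'ᵀ`; its transpose shows that `M + Mᵀ = M' + M'ᵀ` after cancelling `x - η`,
hence `(x + η)M' = xM + ηMᵀ`, and likewise `(x - η)N' = xN - ηNᵀ`. As `mixedDet` is invariant
under transposing both arguments and `mixedDet Xᵀ Y = mixedDet X Yᵀ`, expanding gives
`(x² - η²) mixedDet M' N' = (x² - η²) mixedDet M N`, and `x² - η²` is not a zero divisor.
-/

open Matrix

section MixedDet
variable {K S : Type*} [CommRing K] [Ring S] [Algebra K S]

/-- `∑ ε_{ab} ε_{cd} X_{ac} Y_{bd}`; for commuting entries,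
`det (X + Y) = det X + mixedDet X Y + det Y`. -/
def mixedDet (X Y : Matrix (Fin 2) (Fin 2) S) : S :=
  X 0 0 * Y 1 1 + X 1 1 * Y 0 0 - X 0 1 * Y 1 0 - X 1 0 * Y 0 1

theorem mixedDet_transpose (X Y : Matrix (Fin 2) (Fin 2) S) :
    mixedDet Xᵀ Yᵀ = mixedDet X Y := by
  simp only [mixedDet, Matrix.transpose_apply]; abel

theorem mixedDet_smul_smul (a b : K) (X Y : Matrix (Fin 2) (Fin 2) S) :
    mixedDet (a • X) (b • Y) = (a * b) • mixedDet X Y := by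
  simp only [mixedDet, Matrix.smul_apply, smul_mul_smul_comm, smul_sub, smul_add]

theorem mixedDet_smul_add_transpose (x h : K) (X Y : Matrix (Fin 2) (Fin 2) S) :
    mixedDet (x • X + h • Xᵀ) (x • Y - h • Yᵀ) = ((x + h) * (x - h)) • mixedDet X Y := by
  simp only [mixedDet, Matrix.add_apply, Matrix.sub_apply, Matrix.smul_apply,
    Matrix.transpose_apply, add_mul, mul_sub, smul_mul_smul_comm]
  module

theorem smul_eq_add_transpose_of_smul_eq_sub_transpose {ι : Type*} {x h : K}
    {M M' : Matrix ι ι S}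
    (hreg : IsSMulRegular S (x - h)) (hM : (x - h) • M = x • M' - h • M'ᵀ) :
    (x + h) • M' = x • M + h • Mᵀ := by
  have hMt : (x - h) • Mᵀ = x • M'ᵀ - h • M' := by
    simpa using congrArg Matrix.transpose hM
  have hsym : M + Mᵀ = M' + M'ᵀ := by
    have h2 : (x - h) • (M + Mᵀ) = (x - h) • (M' + M'ᵀ) := by
      linear_combination (norm := module) hM + hMt
    ext a b
    exact hreg (by simpa using congrFun₂ h2 a b)
  linear_combination (norm := module) -hM - h • hsym

theorem mixedDet_eq_of_exchange {x h : K} {M M' N N' : Matrix (Fin 2) (Fin 2) S}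
    (hreg₁ : IsSMulRegular S (x - h)) (hreg₂ : IsSMulRegular S (x + h))
    (hM : (x - h) • M = x • M' - h • M'ᵀ) (hN : (x + h) • N = x • N' + h • N'ᵀ) :
    mixedDet M N = mixedDet M' N' := by
  have hM' := smul_eq_add_transpose_of_smul_eq_sub_transpose hreg₁ hM
  have hN' : (x - h) • N' = x • N - h • Nᵀ := by
    have := smul_eq_add_transpose_of_smul_eq_sub_transpose (M := N) (M' := N') (h := -h)
      (by rwa [sub_neg_eq_add]) (by rwa [sub_neg_eq_add, neg_smul, sub_neg_eq_add])
    rwa [← sub_eq_add_neg, neg_smul, ← sub_eq_add_neg] at this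
  refine hreg₂.mul hreg₁ ?_
  calc ((x + h) * (x - h)) • mixedDet M N
      = mixedDet (x • M + h • Mᵀ) (x • N - h • Nᵀ) := (mixedDet_smul_add_transpose ..).symm
    _ = mixedDet ((x + h) • M') ((x - h) • N') := by rw [hM', hN']
    _ = ((x + h) * (x - h)) • mixedDet M' N' := mixedDet_smul_smul ..

theorem sub_mul_sub_eq_mixedDet (t t' w w' : Fin 2 → S) (h : ∀ a b, Commute (w a) (t' b)) :
    (t 1 * w 0 - t 0 * w 1) * (t' 1 * w' 0 - t' 0 * w' 1) =
      mixedDet (of fun a b => t a * t' b) (of fun a b => w a * w' b) := by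
  simp only [mixedDet, of_apply, mul_sub, sub_mul, mul_assoc, (h _ _).left_comm]
  abel

theorem commute_sub_mul_sub_of_exchange {x h : K} {t t' w w' : Fin 2 → S}
    (hreg₁ : IsSMulRegular S (x - h)) (hreg₂ : IsSMulRegular S (x + h))
    (hT : (x - h) • of (fun a b => t a * t' b) =
      x • of (fun a b => t' b * t a) - h • of (fun a b => t' a * t b))
    (hW : (x + h) • of (fun a b => w a * w' b) =
      x • of (fun a b => w' b * w a) + h • of (fun a b => w' a * w b))
    (htw : ∀ a b, Commute (t a) (w' b)) (hwt : ∀ a b, Commute (w a) (t' b)) :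
    Commute (t 1 * w 0 - t 0 * w 1) (t' 1 * w' 0 - t' 0 * w' 1) := by
  rw [Commute, SemiconjBy, sub_mul_sub_eq_mixedDet _ _ _ _ hwt,
    sub_mul_sub_eq_mixedDet _ _ _ _ fun a b => (htw b a).symm]
  exact (mixedDet_eq_of_exchange hreg₁ hreg₂ hT hW).trans (mixedDet_transpose _ _).symm

end MixedDet

section Bivariate
variable {R A : Type*} [CommRing R] [Ring A] [Algebra R A]

theorem Polynomial.commute_C_iff {S : Type*} [Ring S] {P : S[X]} {s : S} :
    Commute P (C s) ↔ ∀ i, Commute (P.coeff i) s := by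
  simp only [Commute, SemiconjBy, Polynomial.ext_iff, coeff_mul_C, coeff_C_mul]

theorem commute_inU_inV_iff {p q : A[X]} :
    Commute (inU p) (inV q) ↔ ∀ i j, Commute (p.coeff i) (q.coeff j) := by
  simp only [inU, inV, commute_C_iff, coeff_map, Commute.symm_iff (a := C _)]
  exact forall_congr' fun _ => forall_congr' fun _ => Commute.symm_iff

theorem commute_inU_inV_comm {p q : A[X]} :
    Commute (inU p) (inV q) ↔ Commute (inU q) (inV p) := by
  simp only [commute_inU_inV_iff, Commute.symm_iff (a := p.coeff _)]
  exact forall_comm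

theorem mem_center_X_sub_inV_X : (X - inV X : A[X][X]) ∈ Subring.center A[X][X] :=
  Subring.mem_center_iff.2 fun s => ((commute_X s).sub_left
    (commute_C_iff.2 fun i => (commute_X (s.coeff i)).symm).symm).symm.eq

theorem isLeftRegular_X_sub_inV_X_sub_algebraMap (r : R) :
    IsLeftRegular (X - inV X - algebraMap R A[X][X] r) := by
  rw [Polynomial.algebraMap_apply, inV, sub_sub, ← map_add]
  exact (monic_X_sub_C _).isRegular.left

@[simp] theorem inU_mul (p q : A[X]) : inU (p * q) = inU p * inU q := Polynomial.map_mul _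
@[simp] theorem inU_sub (p q : A[X]) : inU (p - q) = inU p - inU q := Polynomial.map_sub _
@[simp] theorem inV_mul (p q : A[X]) : inV (p * q) = inV p * inV q := map_mul _ _ _
@[simp] theorem inV_sub (p q : A[X]) : inV (p - q) = inV p - inV q := map_sub _ _ _

end Bivariate

section Shift
variable {R : Type*} [CommRing R]

noncomputable def shiftAlgHom {S : Type*} [Ring S] [Algebra R S] (c : R) : S[X] →ₐ[R] S[X] :=
  eval₂AlgHom CAlgHom (X - C (algebraMap R S c)) fun a =>
    (commute_X (C a)).symm.sub_right ((Algebra.commute_algebraMap_left c a).symm.map C)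

variable {A : Type*} [Ring A] [Algebra R A]

theorem shiftAlgHom_apply (c : R) (p : A[X]) :
    shiftAlgHom c p = shiftDown (algebraMap R A c) p := rfl

noncomputable def shiftUV (c : R) : A[X][X] →ₐ[R] A[X][X] :=
  (shiftAlgHom c).comp (mapAlgHom (shiftAlgHom c))

theorem mapAlgHom_shiftAlgHom_inU (c : R) (p : A[X]) :
    mapAlgHom (shiftAlgHom c) (inU p) = inU p := by
  have hC : ((shiftAlgHom c : A[X] →ₐ[R] A[X]) : A[X] →+* A[X]).comp C = C :=
    RingHom.ext fun a => eval₂_C _ _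
  rw [inU, mapAlgHom, AlgHom.coe_mk, coe_mapRingHom, Polynomial.map_map,
    AlgHom.toRingHom_eq_coe, hC]

theorem mapAlgHom_shiftAlgHom_inV (c : R) (q : A[X]) :
    mapAlgHom (shiftAlgHom c) (inV q) = inV (shiftDown (algebraMap R A c) q) := by
  simp [inV, mapAlgHom, shiftAlgHom_apply]

theorem shiftUV_inU (c : R) (p : A[X]) :
    shiftUV c (inU p) = inU (shiftDown (algebraMap R A c) p) := by
  rw [shiftUV, AlgHom.comp_apply, mapAlgHom_shiftAlgHom_inU, shiftAlgHom_apply, shiftDown, inU,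
    inU, shiftDown, map_comp]
  simp [Polynomial.algebraMap_apply]

theorem shiftUV_inV (c : R) (q : A[X]) :
    shiftUV c (inV q) = inV (shiftDown (algebraMap R A c) q) := by
  rw [shiftUV, AlgHom.comp_apply, mapAlgHom_shiftAlgHom_inV, shiftAlgHom_apply, shiftDown, inV,
    C_comp]

theorem shiftUV_X_sub_inV_X (c : R) : shiftUV c (X - inV X : A[X][X]) = X - inV X := by
  have : (X : A[X][X]) = inU X := (map_X _).symm
  rw [this, map_sub, shiftUV_inU, shiftUV_inV]
  simp [shiftDown, inU, inV]

end Shift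

/-- For families `T¹, T², U₁, U₂` (written `T 0, T 1, U 0, U 1`) satisfying
(i) `(u−v−η)Tᵃ(u)Tᵇ(v) = (u−v)Tᵇ(v)Tᵃ(u) − ηTᵃ(v)Tᵇ(u)`,
(ii) `(u−v+η)Uₐ(u)U_b(v) = (u−v)U_b(v)Uₐ(u) + ηUₐ(v)U_b(u)`,
(iii) `[Tᵃ(u), U_b(v)] = 0`,
the polynomial `B_c(u) = T²(u)U₁(u−c) − T¹(u)U₂(u−c)` is a commuting family:
`[B_c(u), B_c(v)] = 0` as an identity of polynomials in `u, v`. -/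
theorem B_commuting_family
    {R : Type*} [CommRing R] {A : Type*} [Ring A] [Algebra R A]
    (η c : R) (T U : Fin 2 → A[X])
    (hTT : ∀ a b : Fin 2,
      (Polynomial.X - inV Polynomial.X - algebraMap R (Polynomial (A[X])) η)
          * (inU (T a) * inV (T b))
      = (Polynomial.X - inV Polynomial.X) * (inV (T b) * inU (T a))
        - algebraMap R (Polynomial (A[X])) η * (inV (T a) * inU (T b)))
    (hUU : ∀ a b : Fin 2,
      (Polynomial.X - inV Polynomial.X + algebraMap R (Polynomial (A[X])) η)
          * (inU (U a) * inV (U b))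
      = (Polynomial.X - inV Polynomial.X) * (inV (U b) * inU (U a))
        + algebraMap R (Polynomial (A[X])) η * (inV (U a) * inU (U b)))
    (hTU : ∀ a b : Fin 2, inU (T a) * inV (U b) = inV (U b) * inU (T a)) :
    inU (T 1 * shiftDown (algebraMap R A c) (U 0)
          - T 0 * shiftDown (algebraMap R A c) (U 1))
      * inV (T 1 * shiftDown (algebraMap R A c) (U 0)
          - T 0 * shiftDown (algebraMap R A c) (U 1))
    = inV (T 1 * shiftDown (algebraMap R A c) (U 0)
          - T 0 * shiftDown (algebraMap R A c) (U 1))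
      * inU (T 1 * shiftDown (algebraMap R A c) (U 0)
          - T 0 * shiftDown (algebraMap R A c) (U 1)) := by
  have hWW (a b : Fin 2) := congrArg (shiftUV c) (hUU a b)
  simp only [map_add, map_mul, shiftUV_X_sub_inV_X, shiftUV_inU, shiftUV_inV,
    AlgHom.commutes] at hWW
  have hTW (a b : Fin 2) := (show Commute _ _ from hTU a b).map (mapAlgHom (shiftAlgHom c))
  simp only [mapAlgHom_shiftAlgHom_inU, mapAlgHom_shiftAlgHom_inV] at hTW
  let x : Subring.center A[X][X] := ⟨X - inV X, mem_center_X_sub_inV_X⟩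
  let h : Subring.center A[X][X] :=
    ⟨algebraMap R A[X][X] η, Subring.mem_center_iff.2 fun s => (Algebra.commutes η s).symm⟩
  have hreg₁ : IsSMulRegular A[X][X] (x - h) := (isSMulRegular_algebraMap_iff _).1
    (isLeftRegular_X_sub_inV_X_sub_algebraMap η).isSMulRegular
  have hreg₂ : IsSMulRegular A[X][X] (x + h) := by
    have e : X - inV X + algebraMap R A[X][X] η = X - inV X - algebraMap R _ (-η) := by
      rw [map_neg, sub_neg_eq_add]
    exact (isSMulRegular_algebraMap_iff _).1
      (e ▸ (isLeftRegular_X_sub_inV_X_sub_algebraMap (-η)).isSMulRegular)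
  simp only [inU_sub, inU_mul, inV_sub, inV_mul]
  exact commute_sub_mul_sub_of_exchange (t := fun a => inU (T a)) (t' := fun a => inV (T a))
    (w := fun a => inU (shiftDown (algebraMap R A c) (U a)))
    (w' := fun a => inV (shiftDown (algebraMap R A c) (U a))) hreg₁ hreg₂
    (Matrix.ext hTT) (Matrix.ext hWW) hTW
    fun a b => commute_inU_inV_comm.1 (hTW b a)
end

section
/- Under the hypotheses: (i) (u−v−η)·Tᵃ(u)Tᵇ(v) = (u−v)·Tᵇ(v)Tᵃ(u) − η·Tᵃ(v)Tᵇ(u) for a,b ∈ {1,2}; and (ii) [Tᵃ(u), U_b(v)] = 0 for a,b ∈ {1,2}; the identity B̃_c(u)·T²(u) = T²(u−η)·B_c(u) holds, where B_c(u) := T²(u)U₁(u−c) − T¹(u)U₂(u−c) and B̃_c(u) := T²(u−η)U₁(u−c) − T¹(u−η)U₂(u−c). -/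
open Polynomial

section Aux

variable {A : Type*} [Ring A]

/-- `C a` is central in `A[X]` if `a` is central in `A`. -/
lemma C_central {a : A} (ha : ∀ x : A, a * x = x * a) (q : A[X]) :
    Polynomial.C a * q = q * Polynomial.C a := by
  ext n
  simp [Polynomial.coeff_C_mul, Polynomial.coeff_mul_C, ha]

/-- `u - v` is central in `A[v][u]`. -/
lemma d_central (q : Polynomial (A[X])) :
    (Polynomial.X - inV Polynomial.X) * q = q * (Polynomial.X - inV Polynomial.X) := by
  rw [sub_mul, mul_sub, ← Polynomial.X_mul]
  congr 1
  exact C_central (fun x => by rw [Polynomial.X_mul]) q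

/-- `inU p - inV p` is divisible (on the left) by `u - v`. -/
lemma exists_w (p : A[X]) :
    ∃ w : Polynomial (A[X]), inU p = inV p + (Polynomial.X - inV Polynomial.X) * w := by
  induction p using Polynomial.induction_on' with
  | add p q hp hq =>
    obtain ⟨w1, hw1⟩ := hp
    obtain ⟨w2, hw2⟩ := hq
    refine ⟨w1 + w2, ?_⟩
    show (p + q).map Polynomial.C = _
    rw [Polynomial.map_add]
    show inU p + inU q = _
    rw [hw1, hw2]
    simp only [inV, map_add, mul_add]
    abel
  | monomial n a =>
    refine ⟨Polynomial.C (Polynomial.C a) *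
      (∑ i ∈ Finset.range n,
        Polynomial.X ^ i * (inV Polynomial.X) ^ (n - 1 - i)), ?_⟩
    have hcom : Commute (Polynomial.X : Polynomial (A[X])) (inV Polynomial.X) :=
      Polynomial.commute_X _
    have hgeom := hcom.geom_sum₂_mul n
    have hd : (Polynomial.X - inV Polynomial.X) *
        (Polynomial.C (Polynomial.C a) *
          (∑ i ∈ Finset.range n, Polynomial.X ^ i * (inV Polynomial.X) ^ (n - 1 - i)))
        = Polynomial.C (Polynomial.C a) *
          (Polynomial.X ^ n - (inV Polynomial.X) ^ n) := by
      rw [d_central, mul_assoc, hgeom]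
    rw [hd]
    show (Polynomial.monomial n a).map Polynomial.C = _
    rw [Polynomial.map_monomial, ← Polynomial.C_mul_X_pow_eq_monomial]
    rw [inV, ← Polynomial.C_mul_X_pow_eq_monomial, map_mul, map_pow]
    rw [mul_sub]
    show _ = _ + (_ - Polynomial.C (Polynomial.C a) * (Polynomial.C Polynomial.X) ^ n)
    abel

/-- Evaluating `inU p` under a hom fixing constants. -/
lemma eval₂_inU (f : A[X] →+* A[X]) (x : A[X])
    (hfC : ∀ a : A, f (Polynomial.C a) = Polynomial.C a) (p : A[X]) :
    Polynomial.eval₂ f x (inU p) = Polynomial.eval₂ Polynomial.C x p := by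
  rw [inU, Polynomial.eval₂_map,
    show f.comp (Polynomial.C : A →+* A[X]) = Polynomial.C from RingHom.ext hfC]

lemma eval₂_C_X_eq (p : A[X]) : Polynomial.eval₂ Polynomial.C Polynomial.X p = p :=
  Polynomial.comp_X

lemma eval₂_inV (f : A[X] →+* A[X]) (x : A[X]) (q : A[X]) :
    Polynomial.eval₂ f x (inV q) = f q :=
  Polynomial.eval₂_C _ _

lemma eval₂_C_shift (a : A) (p : A[X]) :
    Polynomial.eval₂ Polynomial.C (Polynomial.X - Polynomial.C a) p = shiftDown a p := rfl

end Aux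

/-- Under (i) `(u−v−η)Tᵃ(u)Tᵇ(v) = (u−v)Tᵇ(v)Tᵃ(u) − ηTᵃ(v)Tᵇ(u)` and
(ii) `[Tᵃ(u), U_b(v)] = 0`, the identity `B̃_c(u)T²(u) = T²(u−η)B_c(u)` holds,
where `B_c(u) = T²(u)U₁(u−c) − T¹(u)U₂(u−c)` and
`B̃_c(u) = T²(u−η)U₁(u−c) − T¹(u−η)U₂(u−c)`. -/
theorem B_tilde_swap
    {R : Type*} [CommRing R] {A : Type*} [Ring A] [Algebra R A]
    (η c : R) (T U : Fin 2 → A[X])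
    (hTT : ∀ a b : Fin 2,
      (Polynomial.X - inV Polynomial.X - algebraMap R (Polynomial (A[X])) η)
          * (inU (T a) * inV (T b))
      = (Polynomial.X - inV Polynomial.X) * (inV (T b) * inU (T a))
        - algebraMap R (Polynomial (A[X])) η * (inV (T a) * inU (T b)))
    (hTU : ∀ a b : Fin 2, inU (T a) * inV (U b) = inV (U b) * inU (T a)) :
    (shiftDown (algebraMap R A η) (T 1) * shiftDown (algebraMap R A c) (U 0)
        - shiftDown (algebraMap R A η) (T 0) * shiftDown (algebraMap R A c) (U 1))
      * T 1
    = shiftDown (algebraMap R A η) (T 1)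
        * (T 1 * shiftDown (algebraMap R A c) (U 0)
            - T 0 * shiftDown (algebraMap R A c) (U 1)) := by
  classical
  -- shift ring homs on `A[X]`
  have hCr : ∀ (r : R) (x : A),
      Commute ((Polynomial.C : A →+* A[X]) x)
        (Polynomial.X - Polynomial.C (algebraMap R A r)) := by
    intro r x
    apply Commute.sub_right
    · exact (Polynomial.commute_X _).symm
    · show _ = _
      rw [← Polynomial.C_mul, ← Polynomial.C_mul, Algebra.commutes]
  let sh : R → (A[X] →+* A[X]) := fun r =>
    Polynomial.eval₂RingHom' (Polynomial.C)
      (Polynomial.X - Polynomial.C (algebraMap R A r)) (hCr r)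
  have hshC : ∀ (r : R) (a : A), sh r (Polynomial.C a) = Polynomial.C a := fun r a =>
    Polynomial.eval₂_C _ _
  have hsh : ∀ (r : R) (p : A[X]), sh r p = shiftDown (algebraMap R A r) p := fun r p => rfl
  have hshX : ∀ (r : R), sh r Polynomial.X
      = Polynomial.X - Polynomial.C (algebraMap R A r) := fun r =>
    Polynomial.eval₂_X _ _
  -- evaluation homs `A[v][u] → A[u]`
  have hcomm1 : ∀ (r : R) (q : A[X]),
      Commute (sh r q) (Polynomial.X : A[X]) := fun r q => (Polynomial.commute_X _).symm
  have hcomm2 : ∀ (q : A[X]), Commute (sh c q)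
      (Polynomial.X - Polynomial.C (algebraMap R A η)) := by
    intro q
    apply Commute.sub_right
    · exact (Polynomial.commute_X _).symm
    · exact Commute.symm
        (show Commute (Polynomial.C (algebraMap R A η)) (sh c q) from
          C_central (fun x => Algebra.commutes η x) _)
  let φT : Polynomial (A[X]) →+* A[X] :=
    Polynomial.eval₂RingHom' (sh c) Polynomial.X (hcomm1 c)
  let φS : Polynomial (A[X]) →+* A[X] :=
    Polynomial.eval₂RingHom' (sh c)
      (Polynomial.X - Polynomial.C (algebraMap R A η)) hcomm2
  let φη : Polynomial (A[X]) →+* A[X] :=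
    Polynomial.eval₂RingHom' (sh η) Polynomial.X (hcomm1 η)
  -- commutation of T's and shifted U's
  have hTV : ∀ a b : Fin 2, T a * shiftDown (algebraMap R A c) (U b)
      = shiftDown (algebraMap R A c) (U b) * T a := by
    intro a b
    have h := congrArg φT (hTU a b)
    simp only [φT, map_mul, Polynomial.eval₂RingHom'_apply] at h
    rwa [eval₂_inU _ _ (hshC c), eval₂_C_X_eq, eval₂_inV, hsh] at h
  have hSV : ∀ a b : Fin 2,
      shiftDown (algebraMap R A η) (T a) * shiftDown (algebraMap R A c) (U b)
      = shiftDown (algebraMap R A c) (U b) * shiftDown (algebraMap R A η) (T a) := by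
    intro a b
    have h := congrArg φS (hTU a b)
    simp only [φS, map_mul, Polynomial.eval₂RingHom'_apply] at h
    rwa [eval₂_inU _ _ (hshC c), eval₂_C_shift, eval₂_inV, hsh] at h
  -- the key exchange identity  S0 * T1 = S1 * T0
  obtain ⟨w0, hw0⟩ := exists_w (T 0)
  obtain ⟨w1, hw1⟩ := exists_w (T 1)
  set d : Polynomial (A[X]) := Polynomial.X - inV Polynomial.X with hd
  set e : Polynomial (A[X]) := algebraMap R (Polynomial (A[X])) η with he
  set W : Polynomial (A[X]) := w0 * inV (T 1) - inV (T 0) * w1 with hW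
  have h3 : inU (T 0) * inV (T 1) - inV (T 0) * inU (T 1) = d * W := by
    rw [hw0, hw1, add_mul, mul_add]
    have hx : inV (T 0) * (d * w1) = d * (inV (T 0) * w1) := by
      rw [← mul_assoc, ← d_central, mul_assoc]
    rw [hx, hW, mul_sub, mul_assoc d w0 (inV (T 1))]
    abel
  have hmain := hTT 0 1
  rw [sub_mul] at hmain
  have h2 : d * (inU (T 0) * inV (T 1)) - d * (inV (T 1) * inU (T 0))
      = e * (inU (T 0) * inV (T 1)) - e * (inV (T 0) * inU (T 1)) :=
    sub_eq_sub_iff_sub_eq_sub.mp hmain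
  have h4 : d * (inU (T 0) * inV (T 1) - inV (T 1) * inU (T 0)) = d * (e * W) := by
    have hde : e * d = d * e := Algebra.commutes η d
    rw [mul_sub, h2, ← mul_sub, h3, ← mul_assoc, hde, mul_assoc]
  have h5 : inU (T 0) * inV (T 1) - inV (T 1) * inU (T 0) = e * W :=
    (Polynomial.monic_X_sub_C (Polynomial.X : A[X])).isRegular.left h4
  have h6 : inV (T 0) * inU (T 1) - inV (T 1) * inU (T 0) = (e - d) * W := by
    rw [sub_mul, ← h5, ← h3]
    abel
  have hφ := congrArg φη h6
  simp only [φη, map_sub, map_mul, Polynomial.eval₂RingHom'_apply] at hφ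
  rw [eval₂_inU _ _ (hshC η), eval₂_inU _ _ (hshC η), eval₂_C_X_eq, eval₂_C_X_eq,
    eval₂_inV, eval₂_inV, hsh, hsh] at hφ
  have hed : Polynomial.eval₂ (sh η) Polynomial.X (e - d) = 0 := by
    rw [he, hd, Polynomial.algebraMap_apply, Polynomial.algebraMap_apply,
      Polynomial.eval₂_sub, Polynomial.eval₂_sub,
      Polynomial.eval₂_C, hshC, Polynomial.eval₂_X, eval₂_inV, hshX]
    abel
  have h0 : Polynomial.eval₂ (sh η) Polynomial.X e - Polynomial.eval₂ (sh η) Polynomial.X d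
      = 0 := by rw [← Polynomial.eval₂_sub]; exact hed
  rw [h0, zero_mul] at hφ
  have hS : shiftDown (algebraMap R A η) (T 0) * T 1
      = shiftDown (algebraMap R A η) (T 1) * T 0 := sub_eq_zero.mp hφ
  -- final assembly
  rw [sub_mul, mul_sub]
  congr 1
  · rw [mul_assoc, ← hTV 1 0]
  · rw [mul_assoc, ← hTV 1 1, ← mul_assoc, hS, mul_assoc]
end

section
/- Under the hypotheses: (i) (u−v−η)·Tᵃ(u)Tᵇ(v) = (u−v)·Tᵇ(v)Tᵃ(u) − η·Tᵃ(v)Tᵇ(u) for a,b ∈ {1,2}; and (ii) [Tᵃ(u), U_b(v)] = 0 for a,b ∈ {1,2}; the identity B̂(u)·T²(u−2η)·T²(u−η)·T²(u) = T²(u−η)·T²(u−2η)·T²(u−3η)·B(u) holds, where B(u) := T²(u)U₁(u−η) − T¹(u)U₂(u−η) and B̂(u) := T²(u−3η)U₁(u−η) − T¹(u−3η)U₂(u−η). -/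
open Polynomial

section YBAux

variable {R : Type*} [CommRing R] {A : Type*} [Ring A] [Algebra R A]

lemma YB_comm_C_alg (r : R) (p : A[X]) :
    Commute (Polynomial.C (algebraMap R A r)) p := by
  show _ * _ = _ * _
  ext n
  simp [coeff_C_mul, coeff_mul_C, Algebra.commutes]

lemma YB_cancel_monic (z : A[X]) (f g : Polynomial (A[X]))
    (h : (Polynomial.X - Polynomial.C z) * f = (Polynomial.X - Polynomial.C z) * g) :
    f = g := by
  have h0 : (Polynomial.X - Polynomial.C z) * (f - g) = 0 := by
    rw [mul_sub, h, sub_self]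
  by_contra hne
  set d := f - g with hdd
  have hd : d ≠ 0 := sub_ne_zero.mpr hne
  have h1 := congrArg (fun p => Polynomial.coeff p (d.natDegree + 1)) h0
  simp only [sub_mul, Polynomial.coeff_sub, Polynomial.coeff_X_mul, Polynomial.coeff_C_mul,
    Polynomial.coeff_zero] at h1
  rw [Polynomial.coeff_eq_zero_of_natDegree_lt (Nat.lt_succ_self _), mul_zero, sub_zero] at h1
  exact (Polynomial.leadingCoeff_ne_zero.mpr hd) h1

/-- shift hom `p ↦ p(X - c)` for `c = algebraMap r`. -/
noncomputable def YBsh (r : R) : A[X] →+* A[X] :=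
  eval₂RingHom' (Polynomial.C : A →+* A[X])
    (Polynomial.X - Polynomial.C (algebraMap R A r))
    (fun a => ((Polynomial.commute_X (Polynomial.C a)).symm).sub_right
      ((YB_comm_C_alg r (Polynomial.C a)).symm))

lemma YBsh_apply (r : R) (p : A[X]) :
    YBsh r p = shiftDown (algebraMap R A r) p := rfl

lemma YBsh_comp_C (r : R) :
    (YBsh (A := A) r).comp (Polynomial.C : A →+* A[X]) = Polynomial.C :=
  RingHom.ext fun a => eval₂_C _ _

lemma YBsh_X (r : R) :
    YBsh (A := A) r Polynomial.X = Polynomial.X - Polynomial.C (algebraMap R A r) :=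
  eval₂_X _ _

/-- Evaluation `u := v` : `A[v][u] → A[v]`. -/
noncomputable def YBev0 : Polynomial (A[X]) →+* A[X] :=
  eval₂RingHom' (RingHom.id (A[X])) Polynomial.X
    (fun a => (Polynomial.commute_X a).symm)

/-- Evaluation `u := v + c` : `A[v][u] → A[v]`. -/
noncomputable def YBevP (r : R) : Polynomial (A[X]) →+* A[X] :=
  eval₂RingHom' (RingHom.id (A[X])) (Polynomial.X + Polynomial.C (algebraMap R A r))
    (fun a => ((Polynomial.commute_X a).symm).add_right ((YB_comm_C_alg r a).symm))

lemma YBev0_inU (p : A[X]) : YBev0 (inU p) = p := by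
  show eval₂ (RingHom.id (A[X])) Polynomial.X (p.map Polynomial.C) = p
  rw [eval₂_map, RingHom.id_comp]
  exact Polynomial.comp_X (p := p)

lemma YBev0_inV (p : A[X]) : YBev0 (inV p) = p := eval₂_C _ _

lemma YBev0_X : YBev0 (A := A) Polynomial.X = Polynomial.X := eval₂_X _ _

lemma YBevP_inU (r : R) (p : A[X]) :
    YBevP r (inU p) = p.comp (Polynomial.X + Polynomial.C (algebraMap R A r)) := by
  show eval₂ (RingHom.id (A[X])) _ (p.map Polynomial.C) = _
  rw [eval₂_map, RingHom.id_comp]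
  rfl

lemma YBevP_inV (r : R) (p : A[X]) : YBevP r (inV p) = p := eval₂_C _ _

lemma YBevP_X (r : R) :
    YBevP (A := A) r Polynomial.X = Polynomial.X + Polynomial.C (algebraMap R A r) :=
  eval₂_X _ _

/-- Two-variable specialization `u := w - c₁`, `v := w - c₂`. -/
noncomputable def YBspec (r₁ r₂ : R) : Polynomial (A[X]) →+* A[X] :=
  eval₂RingHom' (YBsh r₂) (Polynomial.X - Polynomial.C (algebraMap R A r₁))
    (fun a => ((Polynomial.commute_X _).symm).sub_right ((YB_comm_C_alg r₁ _).symm))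

lemma YBspec_inU (r₁ r₂ : R) (p : A[X]) :
    YBspec r₁ r₂ (inU p) = shiftDown (algebraMap R A r₁) p := by
  show eval₂ (YBsh r₂) _ (p.map Polynomial.C) = _
  rw [eval₂_map, YBsh_comp_C]
  rfl

lemma YBspec_inV (r₁ r₂ : R) (p : A[X]) :
    YBspec r₁ r₂ (inV p) = shiftDown (algebraMap R A r₂) p := eval₂_C _ _

/-- `YBG r k` is the integral form of `((X + c)^k - X^k)/c`. -/
noncomputable def YBG (r : R) : ℕ → A[X]
  | 0 => 0
  | (k+1) => (Polynomial.X + Polynomial.C (algebraMap R A r)) * YBG r k + Polynomial.X ^ k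

lemma YBG_comm (r : R) (k : ℕ) (p : A[X]) : Commute (YBG r k) p := by
  induction k with
  | zero => simpa [YBG] using Commute.zero_left p
  | succ k ih =>
      show Commute ((Polynomial.X + Polynomial.C (algebraMap R A r)) * YBG r k
        + Polynomial.X ^ k) p
      exact (((Polynomial.commute_X p).add_left (YB_comm_C_alg r p)).mul_left ih).add_left
        (Polynomial.commute_X_pow p k)

lemma YBG_split (r : R) (n m : ℕ) :
    YBG (A := A) r (n + m)
      = (Polynomial.X + Polynomial.C (algebraMap R A r)) ^ n * YBG r m
        + YBG r n * Polynomial.X ^ m := by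
  induction n with
  | zero => simp [YBG]
  | succ n ih =>
      have h1 : n + 1 + m = (n + m) + 1 := by omega
      rw [h1]
      show (Polynomial.X + Polynomial.C (algebraMap R A r)) * YBG r (n + m)
          + Polynomial.X ^ (n + m) = _
      rw [ih]
      show _ = _ * YBG r m + ((Polynomial.X + Polynomial.C (algebraMap R A r)) * YBG r n
        + Polynomial.X ^ n) * Polynomial.X ^ m
      rw [pow_succ' (Polynomial.X + Polynomial.C (algebraMap R A r)) n, pow_add]
      noncomm_ring

lemma YBG_eta (r : R) (k : ℕ) :
    Polynomial.C (algebraMap R A r) * YBG r k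
      = (Polynomial.X + Polynomial.C (algebraMap R A r)) ^ k - Polynomial.X ^ k := by
  induction k with
  | zero => simp [YBG]
  | succ k ih =>
      show Polynomial.C (algebraMap R A r)
          * ((Polynomial.X + Polynomial.C (algebraMap R A r)) * YBG r k + Polynomial.X ^ k) = _
      rw [mul_add, ← mul_assoc,
        (YB_comm_C_alg r (Polynomial.X + Polynomial.C (algebraMap R A r))).eq, mul_assoc, ih]
      rw [pow_succ' (Polynomial.X + Polynomial.C (algebraMap R A r)) k,
        pow_succ' (Polynomial.X : A[X]) k]
      noncomm_ring

/-- divided-difference operator. -/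
noncomputable def YBD (r : R) (p : Polynomial (A[X])) : A[X] :=
  p.sum fun k c => c * YBG r k

lemma YBD_add (r : R) (p q : Polynomial (A[X])) :
    YBD r (p + q) = YBD r p + YBD r q :=
  Polynomial.sum_add_index p q _ (fun _ => zero_mul _) (fun _ b c => add_mul b c _)

lemma YBD_sub (r : R) (p q : Polynomial (A[X])) :
    YBD r (p - q) = YBD r p - YBD r q := by
  have h := YBD_add r (p - q) q
  rw [sub_add_cancel] at h
  rw [h]
  abel

lemma YBD_monomial (r : R) (n : ℕ) (a : A[X]) :
    YBD r (Polynomial.monomial n a) = a * YBG r n :=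
  Polynomial.sum_monomial_index a _ (zero_mul _)

lemma YBD_mul (r : R) (p q : Polynomial (A[X])) :
    YBD r (p * q) = YBevP r p * YBD r q + YBD r p * YBev0 q := by
  induction p using Polynomial.induction_on' with
  | add p1 p2 h1 h2 =>
      rw [add_mul, YBD_add, h1, h2, map_add, YBD_add, add_mul, add_mul]
      abel
  | monomial n a =>
      induction q using Polynomial.induction_on' with
      | add q1 q2 h1 h2 =>
          rw [mul_add, YBD_add, h1, h2, map_add, YBD_add, mul_add, mul_add]
          abel
      | monomial m b =>
          rw [Polynomial.monomial_mul_monomial, YBD_monomial, YBD_monomial, YBD_monomial]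
          have e1 : YBevP (A := A) r (Polynomial.monomial n a)
              = a * (Polynomial.X + Polynomial.C (algebraMap R A r)) ^ n := by
            show eval₂ _ _ _ = _
            rw [eval₂_monomial]; rfl
          have e2 : YBev0 (A := A) (Polynomial.monomial m b) = b * Polynomial.X ^ m := by
            show eval₂ _ _ _ = _
            rw [eval₂_monomial]; rfl
          rw [e1, e2, YBG_split r n m]
          have c1 : (Polynomial.X + Polynomial.C (algebraMap R A r)) ^ n * b
              = b * (Polynomial.X + Polynomial.C (algebraMap R A r)) ^ n :=
            (((Polynomial.commute_X b).add_left (YB_comm_C_alg r b)).pow_left n).eq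
          have c2 : YBG (A := A) r n * b = b * YBG r n := (YBG_comm r n b).eq
          calc a * b * ((Polynomial.X + Polynomial.C (algebraMap R A r)) ^ n * YBG r m
                + YBG r n * Polynomial.X ^ m)
              = a * (b * (Polynomial.X + Polynomial.C (algebraMap R A r)) ^ n) * YBG r m
                + a * (b * YBG r n) * Polynomial.X ^ m := by noncomm_ring
            _ = a * ((Polynomial.X + Polynomial.C (algebraMap R A r)) ^ n * b) * YBG r m
                + a * (YBG r n * b) * Polynomial.X ^ m := by rw [c1, c2]
            _ = a * (Polynomial.X + Polynomial.C (algebraMap R A r)) ^ n * (b * YBG r m)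
                + a * YBG r n * (b * Polynomial.X ^ m) := by noncomm_ring

lemma YBD_inV (r : R) (p : A[X]) : YBD r (inV p) = 0 := by
  show YBD r (Polynomial.C p) = 0
  rw [← Polynomial.monomial_zero_left, YBD_monomial]
  show p * YBG r 0 = 0
  simp [YBG]

lemma YBD_X (r : R) : YBD (A := A) r Polynomial.X = 1 := by
  rw [← Polynomial.monomial_one_one_eq_X, YBD_monomial]
  show 1 * ((Polynomial.X + Polynomial.C (algebraMap R A r)) * YBG r 0 + Polynomial.X ^ 0) = 1
  simp [YBG]

lemma YBD_inU_eta (r : R) (p : A[X]) :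
    Polynomial.C (algebraMap R A r) * YBD r (inU p)
      = p.comp (Polynomial.X + Polynomial.C (algebraMap R A r)) - p := by
  induction p using Polynomial.induction_on' with
  | add p q hp hq =>
      show Polynomial.C (algebraMap R A r) * YBD r ((p + q).map Polynomial.C) = _
      rw [Polynomial.map_add, YBD_add, mul_add]
      rw [show YBD r (p.map Polynomial.C) = YBD r (inU p) from rfl,
          show YBD r (q.map Polynomial.C) = YBD r (inU q) from rfl, hp, hq,
          Polynomial.add_comp]
      abel
  | monomial n a =>
      show Polynomial.C (algebraMap R A r)
        * YBD r ((Polynomial.monomial n a).map Polynomial.C) = _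
      rw [Polynomial.map_monomial, YBD_monomial, ← mul_assoc,
        (YB_comm_C_alg r (Polynomial.C a)).eq, mul_assoc, YBG_eta]
      rw [Polynomial.monomial_comp, ← Polynomial.C_mul_X_pow_eq_monomial, mul_sub]

lemma YB_algebraMap_eq (r : R) :
    algebraMap R (Polynomial (A[X])) r
      = Polynomial.C (Polynomial.C (algebraMap R A r)) := by
  rw [Polynomial.algebraMap_apply, Polynomial.algebraMap_apply]

/-- The key lemma: `s(w)·t(w+η) = t(w)·s(w+η)`. -/
lemma YB_key (η : R) (s t : A[X])
    (h : (Polynomial.X - inV Polynomial.X - algebraMap R (Polynomial (A[X])) η)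
          * (inU s * inV t)
      = (Polynomial.X - inV Polynomial.X) * (inV t * inU s)
        - algebraMap R (Polynomial (A[X])) η * (inV s * inU t)) :
    s * t.comp (Polynomial.X + Polynomial.C (algebraMap R A η))
      = t * s.comp (Polynomial.X + Polynomial.C (algebraMap R A η)) := by
  set e : A := algebraMap R A η with he
  rw [YB_algebraMap_eq] at h
  have hD := congrArg (YBD η) h
  have hevF : YBevP η ((Polynomial.X : Polynomial (A[X])) - inV Polynomial.X
      - Polynomial.C (Polynomial.C e)) = 0 := by
    rw [map_sub, map_sub, YBevP_X,
      show YBevP (A := A) η (inV Polynomial.X) = Polynomial.X from YBevP_inV η _,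
      show YBevP (A := A) η (Polynomial.C (Polynomial.C e)) = Polynomial.C e from
        YBevP_inV η _]
    abel
  have hDF : YBD η ((Polynomial.X : Polynomial (A[X])) - inV Polynomial.X
      - Polynomial.C (Polynomial.C e)) = 1 := by
    rw [YBD_sub, YBD_sub, YBD_X, YBD_inV,
      show YBD η (Polynomial.C (Polynomial.C e)) = 0 from YBD_inV η _]
    simp
  have hev1 : YBevP η ((Polynomial.X : Polynomial (A[X])) - inV Polynomial.X)
      = Polynomial.C e := by
    rw [map_sub, YBevP_X,
      show YBevP (A := A) η (inV Polynomial.X) = Polynomial.X from YBevP_inV η _]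
    abel
  have hDf1 : YBD η ((Polynomial.X : Polynomial (A[X])) - inV Polynomial.X) = 1 := by
    rw [YBD_sub, YBD_X, YBD_inV]; simp
  have hL : YBD η (((Polynomial.X : Polynomial (A[X])) - inV Polynomial.X
      - Polynomial.C (Polynomial.C e)) * (inU s * inV t)) = s * t := by
    rw [YBD_mul, hevF, hDF, zero_mul, one_mul, map_mul, YBev0_inU, YBev0_inV, zero_add]
  have hDm1 : YBD η (inV t * inU s) = t * YBD η (inU s) := by
    rw [YBD_mul, YBevP_inV, YBD_inV, zero_mul, add_zero]
  have hDm2 : YBD η (inV s * inU t) = s * YBD η (inU t) := by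
    rw [YBD_mul, YBevP_inV, YBD_inV, zero_mul, add_zero]
  have hR1 : YBD η (((Polynomial.X : Polynomial (A[X])) - inV Polynomial.X)
      * (inV t * inU s)) = Polynomial.C e * (t * YBD η (inU s)) + t * s := by
    rw [YBD_mul, hev1, hDf1, hDm1, one_mul, map_mul, YBev0_inV, YBev0_inU]
  have hR2 : YBD η ((Polynomial.C (Polynomial.C e) : Polynomial (A[X]))
      * (inV s * inU t)) = Polynomial.C e * (s * YBD η (inU t)) := by
    rw [YBD_mul,
      show YBevP (A := A) η (Polynomial.C (Polynomial.C e)) = Polynomial.C e from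
        YBevP_inV η _,
      show YBD η (Polynomial.C (Polynomial.C e)) = 0 from YBD_inV η _,
      hDm2, zero_mul, add_zero]
  rw [hL, YBD_sub, hR1, hR2] at hD
  have hfin : s * t + Polynomial.C e * (s * YBD η (inU t))
      = t * s + Polynomial.C e * (t * YBD η (inU s)) := by
    rw [hD]; abel
  have hmove : ∀ x y : A[X], Polynomial.C e * (x * y) = x * (Polynomial.C e * y) := by
    intro x y
    rw [← mul_assoc, (YB_comm_C_alg η x).eq, mul_assoc]
  rw [hmove, hmove, YBD_inU_eta, YBD_inU_eta] at hfin
  have expand : ∀ a b : A[X],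
      a * b + a * (b.comp (Polynomial.X + Polynomial.C e) - b)
        = a * b.comp (Polynomial.X + Polynomial.C e) := by
    intro a b; noncomm_ring
  rw [expand, expand] at hfin
  exact hfin

end YBAux

/-- Under (i) `(u−v−η)Tᵃ(u)Tᵇ(v) = (u−v)Tᵇ(v)Tᵃ(u) − ηTᵃ(v)Tᵇ(u)` and
(ii) `[Tᵃ(u), U_b(v)] = 0`, the identity
`B̂(u)T²(u−2η)T²(u−η)T²(u) = T²(u−η)T²(u−2η)T²(u−3η)B(u)` holds, where
`B(u) = T²(u)U₁(u−η) − T¹(u)U₂(u−η)` and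
`B̂(u) = T²(u−3η)U₁(u−η) − T¹(u−3η)U₂(u−η)`. -/
theorem B_hat_swap
    {R : Type*} [CommRing R] {A : Type*} [Ring A] [Algebra R A]
    (η : R) (T U : Fin 2 → A[X])
    (hTT : ∀ a b : Fin 2,
      (Polynomial.X - inV Polynomial.X - algebraMap R (Polynomial (A[X])) η)
          * (inU (T a) * inV (T b))
      = (Polynomial.X - inV Polynomial.X) * (inV (T b) * inU (T a))
        - algebraMap R (Polynomial (A[X])) η * (inV (T a) * inU (T b)))
    (hTU : ∀ a b : Fin 2, inU (T a) * inV (U b) = inV (U b) * inU (T a)) :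
    (shiftDown (algebraMap R A (3 * η)) (T 1) * shiftDown (algebraMap R A η) (U 0)
        - shiftDown (algebraMap R A (3 * η)) (T 0) * shiftDown (algebraMap R A η) (U 1))
      * shiftDown (algebraMap R A (2 * η)) (T 1)
      * shiftDown (algebraMap R A η) (T 1)
      * T 1
    = shiftDown (algebraMap R A η) (T 1)
        * shiftDown (algebraMap R A (2 * η)) (T 1)
        * shiftDown (algebraMap R A (3 * η)) (T 1)
        * (T 1 * shiftDown (algebraMap R A η) (U 0)
            - T 0 * shiftDown (algebraMap R A η) (U 1)) := by
  -- two-variable commutativity of T² with itself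
  have htt2 : inU (T 1) * inV (T 1) = inV (T 1) * inU (T 1) := by
    apply YB_cancel_monic (Polynomial.X + Polynomial.C (algebraMap R A η))
    have hz : (Polynomial.X : Polynomial (A[X]))
        - Polynomial.C (Polynomial.X + Polynomial.C (algebraMap R A η))
        = Polynomial.X - inV Polynomial.X - algebraMap R (Polynomial (A[X])) η := by
      rw [YB_algebraMap_eq, map_add]
      show _ = Polynomial.X - Polynomial.C Polynomial.X
        - Polynomial.C (Polynomial.C (algebraMap R A η))
      abel
    rw [hz, hTT 1 1]
    simp only [sub_mul]
  have httc : ∀ r₁ r₂ : R,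
      shiftDown (algebraMap R A r₁) (T 1) * shiftDown (algebraMap R A r₂) (T 1)
      = shiftDown (algebraMap R A r₂) (T 1) * shiftDown (algebraMap R A r₁) (T 1) := by
    intro r₁ r₂
    have h := congrArg (YBspec r₁ r₂) htt2
    rwa [map_mul, map_mul, YBspec_inU, YBspec_inV] at h
  have hTUc : ∀ (a b : Fin 2) (r₁ r₂ : R),
      shiftDown (algebraMap R A r₁) (T a) * shiftDown (algebraMap R A r₂) (U b)
      = shiftDown (algebraMap R A r₂) (U b) * shiftDown (algebraMap R A r₁) (T a) := by
    intro a b r₁ r₂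
    have h := congrArg (YBspec r₁ r₂) (hTU a b)
    rwa [map_mul, map_mul, YBspec_inU, YBspec_inV] at h
  have hsh0 : ∀ p : A[X], shiftDown (algebraMap R A (0 : R)) p = p := by
    intro p; simp [shiftDown]
  -- the key exchange lemma and its shifted instances
  have hkey := YB_key η (T 0) (T 1) (hTT 0 1)
  have hkeysh : ∀ r : R,
      shiftDown (algebraMap R A r) (T 0) * shiftDown (algebraMap R A (r - η)) (T 1)
      = shiftDown (algebraMap R A r) (T 1) * shiftDown (algebraMap R A (r - η)) (T 0) := by
    intro r
    have hc := congrArg (YBsh r) hkey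
    rw [map_mul, map_mul] at hc
    have hshc : ∀ p : A[X],
        YBsh r (p.comp (Polynomial.X + Polynomial.C (algebraMap R A η)))
        = shiftDown (algebraMap R A (r - η)) p := by
      intro p
      show YBsh r (eval₂ Polynomial.C (Polynomial.X + Polynomial.C (algebraMap R A η)) p) = _
      rw [Polynomial.hom_eval₂, YBsh_comp_C]
      have hx : YBsh r ((Polynomial.X : A[X]) + Polynomial.C (algebraMap R A η))
          = Polynomial.X - Polynomial.C (algebraMap R A (r - η)) := by
        rw [map_add, YBsh_X,
          show YBsh r (Polynomial.C (algebraMap R A η)) = Polynomial.C (algebraMap R A η) from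
            eval₂_C _ _,
          map_sub, map_sub]
        abel
      rw [hx]
      rfl
    rw [hshc, hshc, YBsh_apply, YBsh_apply] at hc
    exact hc
  have k3 : shiftDown (algebraMap R A (3 * η)) (T 0) * shiftDown (algebraMap R A (2 * η)) (T 1)
      = shiftDown (algebraMap R A (3 * η)) (T 1) * shiftDown (algebraMap R A (2 * η)) (T 0) := by
    have h := hkeysh (3 * η)
    rwa [show (3 * η - η) = 2 * η by ring] at h
  have k2 : shiftDown (algebraMap R A (2 * η)) (T 0) * shiftDown (algebraMap R A η) (T 1)
      = shiftDown (algebraMap R A (2 * η)) (T 1) * shiftDown (algebraMap R A η) (T 0) := by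
    have h := hkeysh (2 * η)
    rwa [show (2 * η - η) = η by ring] at h
  have k1 : shiftDown (algebraMap R A η) (T 0) * T 1
      = shiftDown (algebraMap R A η) (T 1) * T 0 := by
    have h := hkeysh η
    rwa [show (η - η) = (0 : R) by ring, hsh0, hsh0] at h
  -- abbreviations
  set t3 := shiftDown (algebraMap R A (3 * η)) (T 1) with ht3
  set t2 := shiftDown (algebraMap R A (2 * η)) (T 1) with ht2
  set t1 := shiftDown (algebraMap R A η) (T 1) with ht1
  set s3 := shiftDown (algebraMap R A (3 * η)) (T 0) with hs3
  set s2 := shiftDown (algebraMap R A (2 * η)) (T 0) with hs2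
  set s1 := shiftDown (algebraMap R A η) (T 0) with hs1
  set p1 := shiftDown (algebraMap R A η) (U 0) with hp1
  set q1 := shiftDown (algebraMap R A η) (U 1) with hq1
  -- commutation facts
  have hswap2 : ∀ {a b c d : A[X]}, a * b = c * d → ∀ z : A[X],
      a * (b * z) = c * (d * z) := by
    intro a b c d h z
    rw [← mul_assoc, h, mul_assoc]
  have cp12 : p1 * t2 = t2 * p1 := (hTUc 1 0 (2 * η) η).symm
  have cp11 : p1 * t1 = t1 * p1 := (hTUc 1 0 η η).symm
  have cp10 : p1 * T 1 = T 1 * p1 := by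
    have h := hTUc 1 0 0 η
    rw [hsh0] at h
    exact h.symm
  have cq12 : q1 * t2 = t2 * q1 := (hTUc 1 1 (2 * η) η).symm
  have cq11 : q1 * t1 = t1 * q1 := (hTUc 1 1 η η).symm
  have cq10 : q1 * T 1 = T 1 * q1 := by
    have h := hTUc 1 1 0 η
    rw [hsh0] at h
    exact h.symm
  have c32 : t3 * t2 = t2 * t3 := httc (3 * η) (2 * η)
  have c31 : t3 * t1 = t1 * t3 := httc (3 * η) η
  have c21 : t2 * t1 = t1 * t2 := httc (2 * η) η
  -- the two product identities
  have e1 : t3 * (p1 * (t2 * (t1 * T 1))) = t1 * (t2 * (t3 * (T 1 * p1))) := by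
    rw [hswap2 cp12, hswap2 cp11, cp10, hswap2 c32, hswap2 c31, hswap2 c21]
  have e2 : s3 * (q1 * (t2 * (t1 * T 1))) = t1 * (t2 * (t3 * (T 0 * q1))) := by
    rw [hswap2 cq12, hswap2 cq11, cq10, hswap2 k3, hswap2 k2, hswap2 k1,
      hswap2 c32, hswap2 c31, hswap2 c21]
  rw [sub_mul, sub_mul, sub_mul, mul_sub]
  simp only [mul_assoc]
  rw [e1, e2]
end

section
/- Let x and X be elements of an associative algebra satisfying X·x = (x − η)·X. For a polynomial F(u) = Σ_p u^p F_p with coefficients F_p in the algebra, define the left substitution [F(u)]_{u=x} := Σ_p x^p F_p. Suppose A(u) is a polynomial with [A(u)]_{u=x} = X. Then for every polynomial F(u), [A(u)·F(u−η)]_{u=x} = X·[F(u)]_{u=x}. -/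
/-!
Left substitution at `x` is additive and right `A`-linear, and multiplying a polynomial on the
right by `u - h`, with `h` central, multiplies its left substitution on the left by `x - h`.
Hence `[A(u) (u - η)^n]_{u=x} = (x - η)^n X`, which is `X x^n` because `X` semiconjugates `x`
to `x - η`. Since `F(u - η) = Σ_n (u - η)^n F_n`, summing over `n` gives the claim.
-/

open Polynomial

/-- Left substitution `[Σ_k u^k C_k]_{u=x} = Σ_k x^k C_k`, placing all powers
of `x` to the left of the coefficients. -/
noncomputable def leftSubst {A : Type*} [Ring A] (x : A) (F : A[X]) : A :=
  F.sum fun k a => x ^ k * a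

section LeftSubst

variable {A : Type*} [Ring A]

theorem leftSubst_add (x : A) (p q : A[X]) :
    leftSubst x (p + q) = leftSubst x p + leftSubst x q :=
  sum_add_index p q _ (fun _ => mul_zero _) (fun _ _ _ => mul_add _ _ _)

theorem leftSubst_monomial (x : A) (n : ℕ) (a : A) :
    leftSubst x (monomial n a) = x ^ n * a :=
  sum_monomial_index a _ (mul_zero _)

theorem leftSubst_mul_C (x : A) (p : A[X]) (a : A) :
    leftSubst x (p * C a) = leftSubst x p * a := by
  induction p using Polynomial.induction_on' with
  | add p q hp hq => rw [add_mul, leftSubst_add, leftSubst_add, hp, hq, add_mul]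
  | monomial n b => rw [monomial_mul_C, leftSubst_monomial, leftSubst_monomial, mul_assoc]

theorem leftSubst_mul_X (x : A) (p : A[X]) :
    leftSubst x (p * X) = x * leftSubst x p := by
  induction p using Polynomial.induction_on' with
  | add p q hp hq => rw [add_mul, leftSubst_add, leftSubst_add, hp, hq, mul_add]
  | monomial n b => rw [monomial_mul_X, leftSubst_monomial, leftSubst_monomial, pow_succ', mul_assoc]

theorem leftSubst_mul_X_sub_C {h : A} (hh : ∀ b, Commute h b) (x : A) (p : A[X]) :
    leftSubst x (p * (X - C h)) = (x - h) * leftSubst x p := by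
  have hp : leftSubst x (p * (X - C h)) + leftSubst x (p * C h) = leftSubst x (p * X) := by
    rw [← leftSubst_add, ← mul_add, sub_add_cancel]
  rw [leftSubst_mul_X, leftSubst_mul_C, ← (hh _).eq] at hp
  rw [sub_mul, ← hp, add_sub_cancel_right]

theorem leftSubst_mul_X_sub_C_pow {h : A} (hh : ∀ b, Commute h b) (x : A) (p : A[X]) (n : ℕ) :
    leftSubst x (p * (X - C h) ^ n) = (x - h) ^ n * leftSubst x p := by
  induction n with
  | zero => simp
  | succ n ih => rw [pow_succ, ← mul_assoc, leftSubst_mul_X_sub_C hh, ih, pow_succ', mul_assoc]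

end LeftSubst

section ShiftDown

variable {A : Type*} [Ring A]

theorem shiftDown_add (c : A) (p q : A[X]) :
    shiftDown c (p + q) = shiftDown c p + shiftDown c q :=
  add_comp

theorem shiftDown_monomial {h : A} (hh : ∀ b, Commute h b) (n : ℕ) (a : A) :
    shiftDown h (monomial n a) = (X - C h) ^ n * C a := by
  have hcomm : Commute (X - C h) (C a) :=
    (commute_X (C a)).sub_left (by rw [Commute, SemiconjBy, ← C_mul, ← C_mul, (hh a).eq])
  rw [shiftDown, monomial_comp, (hcomm.pow_left n).eq]

end ShiftDown

/-- If `X·x = (x − η)·X` and `A(u)` is a polynomial with `[A(u)]_{u=x} = X`,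
then `[A(u)F(u−η)]_{u=x} = X·[F(u)]_{u=x}` for every polynomial `F`. -/
theorem leftSubst_shift_lemma
    {R : Type*} [CommRing R] {A : Type*} [Ring A] [Algebra R A]
    (η : R) (x ξ : A)
    (hcomm : ξ * x = (x - algebraMap R A η) * ξ)
    (Ap : A[X]) (hA : leftSubst x Ap = ξ) :
    ∀ F : A[X],
      leftSubst x (Ap * shiftDown (algebraMap R A η) F) = ξ * leftSubst x F := by
  have hcentral : ∀ b, Commute (algebraMap R A η) b := Algebra.commute_algebraMap_left η
  have hsemiconj : SemiconjBy ξ x (x - algebraMap R A η) := hcomm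
  intro F
  induction F using Polynomial.induction_on' with
  | add p q hp hq => rw [shiftDown_add, mul_add, leftSubst_add, leftSubst_add, hp, hq, mul_add]
  | monomial n a =>
    rw [shiftDown_monomial hcentral, ← mul_assoc, leftSubst_mul_C,
      leftSubst_mul_X_sub_C_pow hcentral, hA, ← (hsemiconj.pow_right n).eq,
      leftSubst_monomial, mul_assoc]
end

section
/- Let d₁, d₂, d₃, Q₁, Q₂ : ℂ → ℂ with Q₁, Q₂ nowhere zero, η ∈ ℂ, and define Λ₁, Λ₂, Λ₃, τ₁, τ₂ as follows: Λ₁(u) = d₁(u)Q₁(u+η)/Q₁(u), Λ₂(u) = d₂(u)(Q₁(u−η)/Q₁(u))(Q₂(u+η)/Q₂(u)), Λ₃(u) = d₃(u)Q₂(u−η)/Q₂(u), τ₁(u) = Λ₁(u)+Λ₂(u)+Λ₃(u), τ₂(u) = Λ₁(u)Λ₂(u+η)+Λ₁(u)Λ₃(u+η)+Λ₂(u)Λ₃(u+η). Then Q₂ satisfies the third-order finite-difference equation: d₃(x−2η)d₃(x−η)Q₂(x−3η) − τ₁(x−2η)d₃(x−η)Q₂(x−2η) + τ₂(x−2η)Q₂(x−η)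 − d₁(x−2η)d₂(x−η)Q₂(x) = 0 for all x ∈ ℂ. -/
/-- Eliminating `Q₁` from the Bethe-ansatz eigenvalue formulas, the polynomial
`Q₂` satisfies the third-order finite-difference equation
`d₃(x−2η)d₃(x−η)Q₂(x−3η) − τ₁(x−2η)d₃(x−η)Q₂(x−2η) + τ₂(x−2η)Q₂(x−η)
  − d₁(x−2η)d₂(x−η)Q₂(x) = 0`. -/
theorem Q₂_difference_equation
    (η : ℂ) (d₁ d₂ d₃ Q₁ Q₂ : ℂ → ℂ)
    (hQ₁ : ∀ u, Q₁ u ≠ 0) (hQ₂ : ∀ u, Q₂ u ≠ 0)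
    (Λ₁ Λ₂ Λ₃ τ₁ τ₂ : ℂ → ℂ)
    (hΛ₁ : ∀ u, Λ₁ u = d₁ u * (Q₁ (u + η) / Q₁ u))
    (hΛ₂ : ∀ u, Λ₂ u = d₂ u * (Q₁ (u - η) / Q₁ u) * (Q₂ (u + η) / Q₂ u))
    (hΛ₃ : ∀ u, Λ₃ u = d₃ u * (Q₂ (u - η) / Q₂ u))
    (hτ₁ : ∀ u, τ₁ u = Λ₁ u + Λ₂ u + Λ₃ u)
    (hτ₂ : ∀ u, τ₂ u = Λ₁ u * Λ₂ (u + η) + Λ₁ u * Λ₃ (u + η) + Λ₂ u * Λ₃ (u + η)) :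
    ∀ x : ℂ,
      d₃ (x - 2 * η) * d₃ (x - η) * Q₂ (x - 3 * η)
        - τ₁ (x - 2 * η) * d₃ (x - η) * Q₂ (x - 2 * η)
        + τ₂ (x - 2 * η) * Q₂ (x - η)
        - d₁ (x - 2 * η) * d₂ (x - η) * Q₂ x = 0 := by
  intro x
  simp only [hτ₁, hτ₂, hΛ₁, hΛ₂, hΛ₃]
  ring_nf
  field_simp [hQ₁, hQ₂]
  ring
end

section
/- Let d₁, d₂, d₃, Q₁, Q₂ : ℂ → ℂ with Q₁, Q₂ nowhere zero, η ∈ ℂ, and define Λ₁(u) = d₁(u)Q₁(u+η)/Q₁(u), Λ₂(u) = d₂(u)(Q₁(u−η)/Q₁(u))(Q₂(u+η)/Q₂(u)), Λ₃(u) = d₃(u)Q₂(u−η)/Q₂(u), τ₁(u) = Λ₁(u)+Λ₂(u)+Λ₃(u), τ₂(u) = Λ₁(u)Λ₂(u+η)+Λ₁(u)Λ₃(u+η)+Λ₂(u)Λ₃(u+η). Then Q₁ satisfies: d₂(x−2η)d₃(x−η)Q₁(x−3η) − τ₂(x−2η)Q₁(x−2η) + τ₁(x−η)d₁(x−2η)Q₁(x−η)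 − d₁(x−η)d₁(x−2η)Q₁(x) = 0 for all x ∈ ℂ. -/
/-!
Put `u = x − 2η` and `S = Λ₂(u+η) + Λ₃(u+η)`. Then `τ₂(u) = Λ₁(u) S + Λ₂(u) Λ₃(u+η)` and `τ₁(u+η) = Λ₁(u+η) + S`.
Multiplying by `Q₁(u)` resp. `d₁(u) Q₁(u+η)`, the ratios of `Q₁` in `Λ₁` and of `Q₂` in `Λ₂ Λ₃`
telescope, and the two copies of `d₁(u) Q₁(u+η) S` cancel in the difference equation.
-/

section Bethe

variable {K : Type*} [Field K] (η : K) {d₁ d₂ d₃ Q₁ Q₂ Λ₁ Λ₂ Λ₃ τ₁ τ₂ : K → K}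

theorem Λ₁_mul_Q₁ (hQ₁ : ∀ u, Q₁ u ≠ 0) (hΛ₁ : ∀ u, Λ₁ u = d₁ u * (Q₁ (u + η) / Q₁ u)) (u : K) :
    Λ₁ u * Q₁ u = d₁ u * Q₁ (u + η) := by
  rw [hΛ₁, mul_assoc, div_mul_cancel₀ _ (hQ₁ u)]

theorem Λ₂_mul_Λ₃_mul_Q₁ (hQ₁ : ∀ u, Q₁ u ≠ 0) (hQ₂ : ∀ u, Q₂ u ≠ 0)
    (hΛ₂ : ∀ u, Λ₂ u = d₂ u * (Q₁ (u - η) / Q₁ u) * (Q₂ (u + η) / Q₂ u))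
    (hΛ₃ : ∀ u, Λ₃ u = d₃ u * (Q₂ (u - η) / Q₂ u)) (u : K) :
    Λ₂ u * Λ₃ (u + η) * Q₁ u = d₂ u * d₃ (u + η) * Q₁ (u - η) := by
  rw [hΛ₂, hΛ₃, add_sub_cancel_right]
  field_simp [hQ₁ u, hQ₂ u, hQ₂ (u + η)]

theorem Q₁_difference_equation_shifted (hQ₁ : ∀ u, Q₁ u ≠ 0) (hQ₂ : ∀ u, Q₂ u ≠ 0)
    (hΛ₁ : ∀ u, Λ₁ u = d₁ u * (Q₁ (u + η) / Q₁ u))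
    (hΛ₂ : ∀ u, Λ₂ u = d₂ u * (Q₁ (u - η) / Q₁ u) * (Q₂ (u + η) / Q₂ u))
    (hΛ₃ : ∀ u, Λ₃ u = d₃ u * (Q₂ (u - η) / Q₂ u))
    (hτ₁ : ∀ u, τ₁ u = Λ₁ u + Λ₂ u + Λ₃ u)
    (hτ₂ : ∀ u, τ₂ u = Λ₁ u * Λ₂ (u + η) + Λ₁ u * Λ₃ (u + η) + Λ₂ u * Λ₃ (u + η)) (u : K) :
    d₂ u * d₃ (u + η) * Q₁ (u - η) - τ₂ u * Q₁ u + τ₁ (u + η) * d₁ u * Q₁ (u + η)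
      - d₁ (u + η) * d₁ u * Q₁ (u + η + η) = 0 := by
  rw [hτ₁, hτ₂]
  linear_combination d₁ u * Λ₁_mul_Q₁ η hQ₁ hΛ₁ (u + η)
    - (Λ₂ (u + η) + Λ₃ (u + η)) * Λ₁_mul_Q₁ η hQ₁ hΛ₁ u - Λ₂_mul_Λ₃_mul_Q₁ η hQ₁ hQ₂ hΛ₂ hΛ₃ u

end Bethe

/-- Eliminating `Q₂` from the Bethe-ansatz eigenvalue formulas, the polynomial
`Q₁` satisfies the third-order finite-difference equation
`d₂(x−2η)d₃(x−η)Q₁(x−3η) − τ₂(x−2η)Q₁(x−2η) + τ₁(x−η)d₁(x−2η)Q₁(x−η)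
  − d₁(x−η)d₁(x−2η)Q₁(x) = 0`. -/
theorem Q₁_difference_equation
    (η : ℂ) (d₁ d₂ d₃ Q₁ Q₂ : ℂ → ℂ)
    (hQ₁ : ∀ u, Q₁ u ≠ 0) (hQ₂ : ∀ u, Q₂ u ≠ 0)
    (Λ₁ Λ₂ Λ₃ τ₁ τ₂ : ℂ → ℂ)
    (hΛ₁ : ∀ u, Λ₁ u = d₁ u * (Q₁ (u + η) / Q₁ u))
    (hΛ₂ : ∀ u, Λ₂ u = d₂ u * (Q₁ (u - η) / Q₁ u) * (Q₂ (u + η) / Q₂ u))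
    (hΛ₃ : ∀ u, Λ₃ u = d₃ u * (Q₂ (u - η) / Q₂ u))
    (hτ₁ : ∀ u, τ₁ u = Λ₁ u + Λ₂ u + Λ₃ u)
    (hτ₂ : ∀ u, τ₂ u = Λ₁ u * Λ₂ (u + η) + Λ₁ u * Λ₃ (u + η) + Λ₂ u * Λ₃ (u + η)) :
    ∀ x : ℂ,
      d₂ (x - 2 * η) * d₃ (x - η) * Q₁ (x - 3 * η)
        - τ₂ (x - 2 * η) * Q₁ (x - 2 * η)
        + τ₁ (x - η) * d₁ (x - 2 * η) * Q₁ (x - η)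
        - d₁ (x - η) * d₁ (x - 2 * η) * Q₁ x = 0 := by
  intro x
  have h := Q₁_difference_equation_shifted η hQ₁ hQ₂ hΛ₁ hΛ₂ hΛ₃ hτ₁ hτ₂ (x - 2 * η)
  rwa [show x - 2 * η + η = x - η by ring, show x - 2 * η - η = x - 3 * η by ring,
    show x - η + η = x by ring] at h
end
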